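/- arXiv:1106.1663 — 5 statements merged into one kernel-verified Lean document; each statement's English description precedes it below -/
import Mathlib

section
/- Let (σ_n) be a convergent permutation sequence (for every permutation τ, the sequence t(τ,σ_n) converges) such that the lengths |σ_n| do not tend to infinity. Then (σ_n) is eventually constant: there exist a permutation σ and n₀∈ℕ such that σ_n = σ for all n ≥ n₀. -/
open MeasureTheory Filter Set

open scoped Classical

noncomputable section

/-- The number of occurrences of the pattern `τ` in the permutation `π`:
increasing tuples `x₁ < ... < x_k` such that `π` restricted to them has the
same relative order as `τ`. -/
def occCount {k n : ℕ} (τ : Equiv.Perm (Fin k)) (π : Equiv.Perm (Fin n)) : ℕ :=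
  Set.ncard {x : Fin k → Fin n | StrictMono x ∧ ∀ i j : Fin k, π (x i) < π (x j) ↔ τ i < τ j}

/-- The subpermutation density `t(τ, π)`. -/
def densP {k n : ℕ} (τ : Equiv.Perm (Fin k)) (π : Equiv.Perm (Fin n)) : ℝ :=
  if k ≤ n then (occCount τ π : ℝ) / (n.choose k : ℝ) else 0

/-- `F` is a cumulative distribution function on `[0,1]`: non-decreasing,
left-continuous, `F 0 = 0`, with values in `[0,1]`. -/
def IsCDF (F : ℝ → ℝ) : Prop :=
  MonotoneOn F (Set.Icc 0 1) ∧
    (∀ a ∈ Set.Ioc (0:ℝ) 1, Tendsto F (nhdsWithin a (Set.Iio a)) (nhds (F a))) ∧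
    F 0 = 0 ∧ ∀ y ∈ Set.Icc (0:ℝ) 1, F y ∈ Set.Icc (0:ℝ) 1

/-- `Z` is a limit permutation. -/
def LimitPerm (Z : ℝ → ℝ → ℝ) : Prop :=
  Measurable (fun p : Set.Icc (0:ℝ) 1 × Set.Icc (0:ℝ) 1 => Z (p.1 : ℝ) (p.2 : ℝ)) ∧
    (∀ x ∈ Set.Icc (0:ℝ) 1,
      IsCDF (Z x) ∧ Tendsto (Z x) (nhdsWithin 0 (Set.Ioi 0)) (nhds (Z x 0)) ∧ Z x 1 = 1) ∧
    ∀ y ∈ Set.Icc (0:ℝ) 1, (∫ x in Set.Icc (0:ℝ) 1, Z x y) = y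

/-- `μ x` is the Lebesgue–Stieltjes probability measure of the cdf `Z x`, for each
`x ∈ [0,1]`. -/
def LSFamily (Z : ℝ → ℝ → ℝ) (μ : ℝ → Measure ℝ) : Prop :=
  ∀ x ∈ Set.Icc (0:ℝ) 1,
    IsProbabilityMeasure (μ x) ∧ μ x (Set.Icc 0 1) = 1 ∧
      ∀ a b : ℝ, 0 ≤ a → a ≤ b → b ≤ 1 →
        μ x (Set.Ico a b) = ENNReal.ofReal (Z x b - Z x a)

/-- The set of increasing `m`-tuples `0 ≤ y₁ < y₂ < ... < y_m ≤ 1`. -/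
def incSimplex (m : ℕ) : Set (Fin m → ℝ) :=
  {y | StrictMono y ∧ ∀ i, y i ∈ Set.Icc (0:ℝ) 1}

/-- The core function `L_{τ,Z}` of a limit permutation, expressed through the
associated family `μ` of Lebesgue–Stieltjes measures: the product measure
`μ_{x_{τ⁻¹(1)}} × ... × μ_{x_{τ⁻¹(m)}}` of the simplex `{y₁ < ... < y_m}`. -/
def coreFn {m : ℕ} (τ : Equiv.Perm (Fin m)) (μ : ℝ → Measure ℝ) (x : Fin m → ℝ) : ℝ :=
  ((Measure.pi fun i => μ (x (τ.symm i))) (incSimplex m)).toReal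

/-- The subpermutation density `t(τ, Z)` of `τ` in a limit permutation `Z`,
expressed through the associated family `μ` of Lebesgue–Stieltjes measures. -/
def densL {m : ℕ} (τ : Equiv.Perm (Fin m)) (μ : ℝ → Measure ℝ) : ℝ :=
  (Nat.factorial m : ℝ) * ∫ x in incSimplex m, coreFn τ μ x

/-- The rectangular distance between two families of measures (coming from
functions `[0,1]² → [0,1]` whose sections are cdfs). -/
def rectDist (μ₁ μ₂ : ℝ → Measure ℝ) : ℝ :=
  sSup {d : ℝ | ∃ x₁ x₂ α₁ α₂ : ℝ,
    0 ≤ x₁ ∧ x₁ < x₂ ∧ x₂ ≤ 1 ∧ 0 ≤ α₁ ∧ α₁ < α₂ ∧ α₂ ≤ 1 ∧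
    d = |(∫ x in Set.Icc x₁ x₂, (μ₁ x (Set.Icc α₁ α₂)).toReal) -
          ∫ x in Set.Icc x₁ x₂, (μ₂ x (Set.Icc α₁ α₂)).toReal|}

/-- A weighted permutation of order `k`; entries are 0-based, so `Q i j`
stands for `Q(i+1, j+1)` in the 1-based notation. -/
def WeightedPerm {k : ℕ} (Q : Fin k → Fin k → ℝ) : Prop :=
  (∀ i j, Q i j ∈ Set.Icc (0:ℝ) 1) ∧ (∀ i, Monotone (Q i)) ∧
    ∀ j : Fin k, (j : ℝ) ≤ ∑ i, Q i j ∧ ∑ i, Q i j ≤ (j : ℝ) + 1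

/-- `Q` extended by the conventions `Q(i,0) = 0` and `Q(i,a) = 1` for `a ≥ k+1`;
the second argument `a : ℕ` is 1-based. -/
def Qext {k : ℕ} (Q : Fin k → Fin k → ℝ) (i : Fin k) (a : ℕ) : ℝ :=
  if h : 1 ≤ a ∧ a ≤ k then Q i ⟨a - 1, by omega⟩ else if a = 0 then 0 else 1

/-- The subpermutation density `t(τ, Q)` of `τ` in a weighted permutation `Q`. -/
def densW {m n : ℕ} (τ : Equiv.Perm (Fin m)) (Q : Fin n → Fin n → ℝ) : ℝ :=
  (n.choose m : ℝ)⁻¹ *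
    ∑ X ∈ Finset.univ.filter (fun X : Fin m → Fin n => StrictMono X),
      ∑ A ∈ Finset.univ.filter (fun A : Fin m → Fin (n + 1) => StrictMono A),
        ∏ i : Fin m, (Qext Q (X i) ((A (τ i) : ℕ) + 1) - Qext Q (X i) (A (τ i) : ℕ))

/-- The rectangular distance between two square matrices of order `n`
(in particular, weighted permutations): `a` and `b` range over `[n+1]`
(1-based) with `a < b`, and `S` over the subintervals of `[n]`. -/
def rectDistW {n : ℕ} (Q₁ Q₂ : Fin n → Fin n → ℝ) : ℝ :=
  sSup {d : ℝ | ∃ (lo hi : Fin n) (a b : ℕ), 1 ≤ a ∧ a < b ∧ b ≤ n + 1 ∧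
    d = (n : ℝ)⁻¹ * |∑ x ∈ Finset.Icc lo hi,
        ((Qext Q₁ x b - Qext Q₁ x a) - (Qext Q₂ x b - Qext Q₂ x a))|}

/-- The bipartite adjacency matrix `Q_σ` of the graph of a permutation:
`Q_σ(a,b) = 1` iff `σ(a) < b` (1-based). -/
def QofPerm {n : ℕ} (σ : Equiv.Perm (Fin n)) : Fin n → Fin n → ℝ :=
  fun i j => if (σ i : ℕ) < (j : ℕ) then 1 else 0

/-- The step function `Z_Q : [0,1]² → [0,1]` associated with a matrix `Q` of
order `n`: `Z_Q(x,y) = 0` if `y = 0`, `Z_Q(0,y) = ⌈ny⌉/n`, and otherwise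
`Z_Q(x,y) = Q(⌈nx⌉, ⌈ny⌉)` (1-based, with the conventions of `Qext`). -/
def stepW {n : ℕ} (Q : Fin n → Fin n → ℝ) : ℝ → ℝ → ℝ := fun x y =>
  if y = 0 then 0
  else if x = 0 then ((⌈(n : ℝ) * y⌉ : ℤ) : ℝ) / (n : ℝ)
  else if h : ∃ i : Fin n, ((i : ℕ) + 1 : ℤ) = ⌈(n : ℝ) * x⌉ then
    Qext Q h.choose (⌈(n : ℝ) * y⌉).toNat
  else 0

/-- The family of Lebesgue–Stieltjes measures of the step function `Z_Q`:
for `x` with `⌈nx⌉ = i ∈ [n]`, the cdf `Z_Q(x,·)` is a step function whose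
Lebesgue–Stieltjes measure places mass `Q(i,j+1) - Q(i,j)` at the point `j/n`
for `0 ≤ j ≤ n`. -/
def stepWMeasures {n : ℕ} (Q : Fin n → Fin n → ℝ) : ℝ → Measure ℝ := fun x =>
  if h : ∃ i : Fin n, ((i : ℕ) + 1 : ℤ) = ⌈(n : ℝ) * x⌉ then
    ∑ j : Fin (n + 1),
      ENNReal.ofReal (Qext Q h.choose ((j : ℕ) + 1) - Qext Q h.choose (j : ℕ)) •
        Measure.dirac ((j : ℝ) / (n : ℝ))
  else Measure.dirac 0

/-- The step function `Z_σ` of a permutation `σ`. -/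
def stepFun {n : ℕ} (σ : Equiv.Perm (Fin n)) : ℝ → ℝ → ℝ := stepW (QofPerm σ)

/-- The family of Lebesgue–Stieltjes measures of the step function `Z_σ`. -/
def stepMeasures {n : ℕ} (σ : Equiv.Perm (Fin n)) : ℝ → Measure ℝ :=
  stepWMeasures (QofPerm σ)

/-- The joint law of `((X₁,...,Xₙ), (a₁,...,aₙ))`, where the `Xᵢ` are i.i.d.
uniform on `[0,1]` and, conditionally on the `Xᵢ`, the `aᵢ` are independent
with `aᵢ` distributed according to `μ (Xᵢ)`. -/
def jointMeasure (μ : ℝ → Measure ℝ) (n : ℕ) : Measure ((Fin n → ℝ) × (Fin n → ℝ)) :=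
  (Measure.pi fun _ : Fin n => volume.restrict (Set.Icc (0:ℝ) 1)).bind fun X =>
    (Measure.pi fun i => μ (X i)).map fun a => (X, a)

/-- The (1-based) rank of `v i` among `v 1, ..., v n`. -/
def rankOf {n : ℕ} (v : Fin n → ℝ) (i : Fin n) : ℕ :=
  (Finset.univ.filter fun j => v j ≤ v i).card

/-- `π` is the permutation `S ∘ R⁻¹` determined by the sample
`ω = ((X₁,...,Xₙ), (a₁,...,aₙ))`, where `R` and `S` are the rank functions
of the `Xᵢ` and the `aᵢ`. -/
def IsSamplePerm {n : ℕ} (ω : (Fin n → ℝ) × (Fin n → ℝ)) (π : Equiv.Perm (Fin n)) : Prop :=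
  ∀ i p q : Fin n, rankOf ω.1 i = (p : ℕ) + 1 → rankOf ω.2 i = (q : ℕ) + 1 → π p = q

/-- The `Z`-random permutation determined by the sample `ω`; it is well defined
(the witness is unique) off a null set. -/
def samplePerm {n : ℕ} (ω : (Fin n → ℝ) × (Fin n → ℝ)) : Equiv.Perm (Fin n) :=
  if h : ∃! π : Equiv.Perm (Fin n), IsSamplePerm ω π then h.choose else 1

/-- The subinterval `{lo+1, ..., hi}` of `[n]` (as a finset of 0-based indices
`x` with `lo ≤ x < hi`). -/
def intervalFin (n : ℕ) (lo hi : ℕ) : Finset (Fin n) :=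
  Finset.univ.filter fun x => lo ≤ (x : ℕ) ∧ (x : ℕ) < hi

/-- `c : Fin (k+1) → ℕ` is the sequence of cut points of an equitable
`k`-partition of `[n]` into consecutive intervals `C_i = {c i + 1, ..., c (i+1)}`. -/
def IsEquipartition {k : ℕ} (n : ℕ) (c : Fin (k + 1) → ℕ) : Prop :=
  Monotone c ∧ c 0 = 0 ∧ c (Fin.last k) = n ∧
    ∀ i j : Fin k, ((intervalFin n (c i.castSucc) (c i.succ)).card : ℤ) -
      ((intervalFin n (c j.castSucc) (c j.succ)).card : ℤ) ≤ 1

/-- The number of edges of the graph `G_σ` between `A` and `B`: pairs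
`(a,b) ∈ A × B` with `σ(a) < b` (1-based). -/
def edgeCount {n : ℕ} (σ : Equiv.Perm (Fin n)) (A B : Finset (Fin n)) : ℕ :=
  ((A ×ˢ B).filter fun p => (σ p.1 : ℕ) < (p.2 : ℕ)).card

/-- The partition matrix `Q_{σ,P}` of `σ` induced by the partition with cut
points `c`. -/
def partMatrix {n k : ℕ} (σ : Equiv.Perm (Fin n)) (c : Fin (k + 1) → ℕ) :
    Fin k → Fin k → ℝ := fun u w =>
  (edgeCount σ (intervalFin n (c u.castSucc) (c u.succ))
      (intervalFin n (c w.castSucc) (c w.succ)) : ℝ) /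
    (((intervalFin n (c u.castSucc) (c u.succ)).card : ℝ) *
      ((intervalFin n (c w.castSucc) (c w.succ)).card : ℝ))

/-- The blow-up matrix `K(P,Q) : [n]² → [0,1]` of the matrix `Q : [k]² → [0,1]`
with respect to the partition with cut points `c`. -/
def blowup {n k : ℕ} (c : Fin (k + 1) → ℕ) (Q : Fin k → Fin k → ℝ) :
    Fin n → Fin n → ℝ := fun x y =>
  if hx : ∃ i : Fin k, c i.castSucc ≤ (x : ℕ) ∧ (x : ℕ) < c i.succ then
    if hy : ∃ j : Fin k, c j.castSucc ≤ (y : ℕ) ∧ (y : ℕ) < c j.succ then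
      Q hx.choose hy.choose
    else 0
  else 0

/-- The right limit `lim_{α' → α⁺} F(α')` of a (monotone) cdf `F` on `[0,1]`,
with the convention that the limit at `α = 1` is `1`. -/
def cdfRightLim (F : ℝ → ℝ) (α : ℝ) : ℝ :=
  if α = 1 then 1 else sInf (F '' Set.Ioc α 1)

/-- The cdf `F` is discontinuous at `α`: `lim_{α' → α⁺} F(α') > F(α)`. -/
def cdfDiscontAt (F : ℝ → ℝ) (α : ℝ) : Prop :=
  F α < cdfRightLim F α

private lemma occCount_eq_card {k n : ℕ} (τ : Equiv.Perm (Fin k)) (π : Equiv.Perm (Fin n)) :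
    occCount τ π = (Finset.univ.filter fun x : Fin k → Fin n =>
      StrictMono x ∧ ∀ i j : Fin k, π (x i) < π (x j) ↔ τ i < τ j).card := by
  have h : {x : Fin k → Fin n | StrictMono x ∧ ∀ i j : Fin k, π (x i) < π (x j) ↔ τ i < τ j}
      = ↑(Finset.univ.filter fun x : Fin k → Fin n =>
        StrictMono x ∧ ∀ i j : Fin k, π (x i) < π (x j) ↔ τ i < τ j) := by
    ext x; simp
  rw [occCount, h, Set.ncard_coe_finset]

private lemma fin_strictMono_eq_id {m : ℕ} {x : Fin m → Fin m} (hx : StrictMono x) :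
    x = id := by
  have hr : Set.range x = Set.range (id : Fin m → Fin m) := by
    rw [(Finite.injective_iff_surjective.mp hx.injective).range_eq, Set.range_id]
  haveI : WellFoundedLT (Fin m) := inferInstance
  exact (StrictMono.range_inj (β := Fin m) hx strictMono_id).mp hr

private lemma perm_eq_of_lt_iff {m : ℕ} {π σ₀ : Equiv.Perm (Fin m)}
    (h : ∀ i j, π i < π j ↔ σ₀ i < σ₀ j) : π = σ₀ := by
  have hs : StrictMono (fun i => π (σ₀.symm i)) := by
    intro a b hab
    exact (h (σ₀.symm a) (σ₀.symm b)).mpr (by simpa using hab)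
  have := fin_strictMono_eq_id hs
  ext i
  have := congrFun this (σ₀ i)
  exact congrArg Fin.val (by simpa using this)

private lemma densP_self {m : ℕ} (σ₀ : Equiv.Perm (Fin m)) : densP σ₀ σ₀ = 1 := by
  have hocc : occCount σ₀ σ₀ = 1 := by
    have h : {x : Fin m → Fin m | StrictMono x ∧
        ∀ i j : Fin m, σ₀ (x i) < σ₀ (x j) ↔ σ₀ i < σ₀ j} = {id} := by
      ext x
      constructor
      · rintro ⟨hx, -⟩; exact fin_strictMono_eq_id hx
      · rintro rfl; exact ⟨strictMono_id, fun i j => Iff.rfl⟩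
    rw [occCount, h, Set.ncard_singleton]
  rw [densP, if_pos le_rfl, hocc, Nat.choose_self]
  norm_num

private lemma densP_eq_zero_of_lt {k n : ℕ} (τ : Equiv.Perm (Fin k)) (π : Equiv.Perm (Fin n))
    (h : n < k) : densP τ π = 0 := by
  rw [densP, if_neg (by omega)]

private lemma densP_ne_zero_same {m : ℕ} {σ₀ π : Equiv.Perm (Fin m)}
    (h : densP σ₀ π ≠ 0) : π = σ₀ := by
  by_contra hne
  apply h
  have hocc : occCount σ₀ π = 0 := by
    have h : {x : Fin m → Fin m | StrictMono x ∧
        ∀ i j : Fin m, π (x i) < π (x j) ↔ σ₀ i < σ₀ j} = ∅ := by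
      ext x
      simp only [Set.mem_setOf_eq, Set.mem_empty_iff_false, iff_false, not_and]
      intro hx hcond
      exact hne (perm_eq_of_lt_iff (by simpa [fin_strictMono_eq_id hx] using hcond))
    rw [occCount, h, Set.ncard_empty]
  rw [densP, hocc]
  simp

private lemma pattCard {k n : ℕ} (π : Equiv.Perm (Fin n)) (x : Fin k → Fin n)
    (hinj : Function.Injective (fun i => π (x i))) :
    (Finset.univ.image (fun i => π (x i))).card = k := by
  rw [Finset.card_image_of_injective _ hinj, Finset.card_univ, Fintype.card_fin]

/-- The pattern of `x` under `π`. -/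
private def pattAux {k n : ℕ} (π : Equiv.Perm (Fin n)) (x : Fin k → Fin n)
    (hinj : Function.Injective (fun i => π (x i))) : Equiv.Perm (Fin k) :=
  Equiv.ofBijective
    (fun i => ((Finset.univ.image (fun i => π (x i))).orderIsoOfFin (pattCard π x hinj)).symm
      ⟨π (x i), Finset.mem_image_of_mem _ (Finset.mem_univ i)⟩)
    (Finite.injective_iff_bijective.mp (fun a b hab => hinj (congrArg Subtype.val
      (((Finset.univ.image (fun i => π (x i))).orderIsoOfFin
        (pattCard π x hinj)).symm.injective hab))))

private def pattFun {k n : ℕ} (π : Equiv.Perm (Fin n)) (x : Fin k → Fin n) :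
    Equiv.Perm (Fin k) :=
  if hinj : Function.Injective (fun i => π (x i)) then pattAux π x hinj else 1

private lemma pattFun_spec {k n : ℕ} (π : Equiv.Perm (Fin n)) (x : Fin k → Fin n)
    (hinj : Function.Injective (fun i => π (x i))) :
    ∀ i j, π (x i) < π (x j) ↔ pattFun π x i < pattFun π x j := by
  intro i j
  rw [pattFun, dif_pos hinj, pattAux]
  simp only [Equiv.ofBijective_apply]
  rw [OrderIso.lt_iff_lt]
  exact (Subtype.mk_lt_mk).symm

private lemma card_strictMono {k n : ℕ} :
    (Finset.univ.filter fun x : Fin k → Fin n => StrictMono x).card = n.choose k := by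
  rw [← Fintype.card_subtype]
  have e : {x : Fin k → Fin n // StrictMono x} ≃ {s : Finset (Fin n) // s.card = k} :=
    { toFun := fun x => ⟨Finset.univ.image x.1, by
        rw [Finset.card_image_of_injective _ x.2.injective, Finset.card_univ, Fintype.card_fin]⟩
      invFun := fun s => ⟨s.1.orderEmbOfFin s.2, (s.1.orderEmbOfFin s.2).strictMono⟩
      left_inv := by
        rintro ⟨x, hx⟩
        ext1
        haveI : WellFoundedLT (Fin k) := inferInstance
        refine (StrictMono.range_inj (β := Fin k) (Finset.orderEmbOfFin _ _).strictMono hx).mp ?_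
        rw [Finset.range_orderEmbOfFin]
        simp [Set.range_comp]
      right_inv := by
        rintro ⟨s, hs⟩
        ext1
        have := Finset.range_orderEmbOfFin s hs
        rw [← Finset.coe_inj, ← this]
        simp [Set.range_comp, Set.image_univ]
        }
  rw [Fintype.card_congr e, Fintype.card_finset_len, Fintype.card_fin]

private lemma sum_densP {k n : ℕ} (π : Equiv.Perm (Fin n)) (hkn : k ≤ n) :
    ∑ τ : Equiv.Perm (Fin k), densP τ π = 1 := by
  have hocc : ∑ τ : Equiv.Perm (Fin k), (occCount τ π : ℝ) = (n.choose k : ℝ) := by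
    rw [← Nat.cast_sum]
    norm_cast
    have key : ∀ τ : Equiv.Perm (Fin k), occCount τ π =
        ((Finset.univ.filter fun x : Fin k → Fin n => StrictMono x).filter
          (fun x => pattFun π x = τ)).card := by
      intro τ
      rw [occCount_eq_card, Finset.filter_filter]
      congr 1
      apply Finset.filter_congr
      intro x _
      constructor
      · rintro ⟨hx, hcond⟩
        refine ⟨hx, ?_⟩
        have hinj : Function.Injective (fun i => π (x i)) :=
          π.injective.comp hx.injective |>.comp fun a b h => h  -- fix
        apply perm_eq_of_lt_iff
        intro i j
        rw [← pattFun_spec π x hinj i j, hcond i j]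
      · rintro ⟨hx, rfl⟩
        have hinj : Function.Injective (fun i => π (x i)) :=
          π.injective.comp hx.injective |>.comp fun a b h => h
        exact ⟨hx, fun i j => pattFun_spec π x hinj i j⟩
    calc ∑ τ : Equiv.Perm (Fin k), occCount τ π
        = ∑ τ : Equiv.Perm (Fin k),
            ((Finset.univ.filter fun x : Fin k → Fin n => StrictMono x).filter
              (fun x => pattFun π x = τ)).card := by
          exact Finset.sum_congr rfl fun τ _ => key τ
      _ = (Finset.univ.filter fun x : Fin k → Fin n => StrictMono x).card :=
          (Finset.card_eq_sum_card_fiberwise fun x _ => Finset.mem_univ _).symm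
      _ = n.choose k := card_strictMono
  have hch : (0:ℝ) < (n.choose k : ℝ) := by
    exact_mod_cast Nat.choose_pos hkn
  have : ∀ τ : Equiv.Perm (Fin k), densP τ π = (occCount τ π : ℝ) / (n.choose k : ℝ) := by
    intro τ; rw [densP, if_pos hkn]
  rw [Finset.sum_congr rfl fun τ _ => this τ, ← Finset.sum_div, hocc, div_self hch.ne']

private lemma densP_one_of_heq {m n' : ℕ} (h : n' = m) (π : Equiv.Perm (Fin n'))
    (σ₀ : Equiv.Perm (Fin m)) (hh : HEq π σ₀) : densP σ₀ π = 1 := by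
  subst h
  rw [eq_of_heq hh]
  exact densP_self σ₀

private lemma final_aux {m n' : ℕ} (σ₀ : Equiv.Perm (Fin m)) (π : Equiv.Perm (Fin n'))
    (hle : n' ≤ m) (hne : densP σ₀ π ≠ 0) : n' = m ∧ HEq π σ₀ := by
  have hm : m ≤ n' := by
    by_contra h
    exact hne (densP_eq_zero_of_lt σ₀ π (by omega))
  have heq : n' = m := le_antisymm hle hm
  subst heq
  exact ⟨rfl, heq_of_eq (densP_ne_zero_same hne)⟩

/-- a convergent permutation sequence whose lengths do not tend to
infinity is eventually constant. -/
theorem convergent_bounded_length_eventually_constant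
    (len : ℕ → ℕ) (σ : ∀ n : ℕ, Equiv.Perm (Fin (len n)))
    (hconv : ∀ (m : ℕ) (τ : Equiv.Perm (Fin m)),
      ∃ L : ℝ, Tendsto (fun n => densP τ (σ n)) atTop (nhds L))
    (hlen : ¬ Tendsto len atTop atTop) :
    ∃ (m : ℕ) (σ₀ : Equiv.Perm (Fin m)) (n₀ : ℕ),
      ∀ n ≥ n₀, len n = m ∧ HEq (σ n) σ₀ := by
  rw [tendsto_atTop_atTop] at hlen
  push_neg at hlen
  obtain ⟨B, hB⟩ := hlen
  -- the set of n with len n < B is infinite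
  have hfreq : ∃ᶠ n in atTop, len n < B := by
    rw [frequently_atTop]
    intro N
    obtain ⟨n, hn, hlt⟩ := hB N
    exact ⟨n, hn, hlt⟩
  have hS0 : {n | len n < B}.Infinite := Nat.frequently_atTop_iff_infinite.mp hfreq
  haveI : Infinite {n | len n < B} := Set.infinite_coe_iff.mpr hS0
  -- pigeonhole: one (length, permutation) pair occurs infinitely often
  have hF : ∀ n : {n | len n < B}, len n.1 < B := fun n => n.2
  obtain ⟨y, hfib⟩ := Finite.exists_infinite_fiber
    (fun n : {n | len n < B} =>
      (⟨⟨len n.1, n.2⟩, σ n.1⟩ : Σ b : Fin B, Equiv.Perm (Fin b)))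
  obtain ⟨mB, σ₀⟩ := y
  have hmem : ∀ p : ↥((fun n : {n | len n < B} =>
      (⟨⟨len n.1, n.2⟩, σ n.1⟩ : Σ b : Fin B, Equiv.Perm (Fin b))) ⁻¹' {⟨mB, σ₀⟩}),
      (p.1.1 : ℕ) ∈ {n | len n = (mB : ℕ) ∧ HEq (σ n) σ₀} := by
    intro p
    have hp := p.2
    simp only [Set.mem_preimage, Set.mem_singleton_iff] at hp
    obtain ⟨h1, h2⟩ := Sigma.mk.inj_iff.mp hp
    exact ⟨congrArg Fin.val h1, h2⟩
  have hT : {n | len n = (mB : ℕ) ∧ HEq (σ n) σ₀}.Infinite := by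
    rw [← Set.infinite_coe_iff]
    refine Infinite.of_injective (fun p => ⟨p.1.1, hmem p⟩) ?_
    rintro ⟨⟨a, ha⟩, ha'⟩ ⟨⟨b, hb⟩, hb'⟩ h
    simp only [Subtype.mk.injEq] at h ⊢
    exact h
  have hTfreq : ∃ᶠ n in atTop, len n = (mB : ℕ) ∧ HEq (σ n) σ₀ :=
    Nat.frequently_atTop_iff_infinite.mpr hT
  -- the limit of densP σ₀ (σ n) is 1
  obtain ⟨L, hL⟩ := hconv (mB : ℕ) σ₀
  have hL1 : L = 1 := by
    refine tendsto_nhds_unique_of_frequently_eq hL tendsto_const_nhds ?_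
    exact hTfreq.mono fun n ⟨h1, h2⟩ => densP_one_of_heq h1 (σ n) σ₀ h2
  -- the limits of densities of all patterns of length m+1 are 0
  choose Lf hLf using hconv ((mB : ℕ) + 1)
  have hLf0 : ∀ τ : Equiv.Perm (Fin ((mB : ℕ) + 1)), Lf τ = 0 := by
    intro τ
    refine tendsto_nhds_unique_of_frequently_eq (hLf τ) tendsto_const_nhds ?_
    refine hTfreq.mono fun n ⟨h1, _⟩ => ?_
    exact densP_eq_zero_of_lt τ (σ n) (by omega)
  have hsum : Tendsto (fun n => ∑ τ : Equiv.Perm (Fin ((mB : ℕ) + 1)), densP τ (σ n)) atTop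
      (nhds 0) := by
    have := tendsto_finset_sum (Finset.univ : Finset (Equiv.Perm (Fin ((mB : ℕ) + 1))))
      (fun τ _ => hLf τ)
    simpa [hLf0] using this
  -- eventually len n ≤ m
  have hev1 : ∀ᶠ n in atTop, len n ≤ (mB : ℕ) := by
    filter_upwards [hsum.eventually (gt_mem_nhds one_pos)] with n hn
    by_contra h
    rw [sum_densP (σ n) (by omega)] at hn
    exact lt_irrefl 1 hn
  -- eventually densP σ₀ (σ n) ≠ 0
  have hev2 : ∀ᶠ n in atTop, densP σ₀ (σ n) ≠ 0 := by
    rw [hL1] at hL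
    filter_upwards [hL.eventually (lt_mem_nhds (by norm_num : (1:ℝ)/2 < 1))] with n hn
    intro h0
    rw [h0] at hn
    norm_num at hn
  obtain ⟨n₀, hn₀⟩ := eventually_atTop.mp (hev1.and hev2)
  exact ⟨(mB : ℕ), σ₀, n₀, fun n hn => final_aux σ₀ (σ n) (hn₀ n hn).1 (hn₀ n hn).2⟩


end
end

section
/- If σ:[n]→[n] is a permutation and P=(C_i)_{i=1}^k is an equitable k-partition of [n] with n>4k², then the partition matrix Q_{σ,P} is a weighted permutation. -/
open MeasureTheory Filter Set

open scoped Classical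

noncomputable section

/-!
Let `C_w = {L, …, L + s - 1}` (0-based). Summed over all parts, the edges into `C_w` number
`∑_{b ∈ C_w} #{a | σ a < b} = ∑_{b ∈ C_w} b = s (L + (s - 1) / 2)`. Equitability puts every part
size in `[s - 1, s + 1]`, hence `L ∈ [w (s - 1), w (s + 1)]`, and `n > 4k²` forces `s ≥ 4k`;
dividing by the part sizes then lands the column sum in `[w, w + 1]`. Rows are monotone because
`C_w` lies left of `C_{w'}` for `w < w'`: above any threshold `σ a` lies either all of `C_{w'}` or
none of `C_w`.
-/

open scoped Finset

section Intervals

variable {n : ℕ}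

lemma image_val_intervalFin {lo hi : ℕ} (h : hi ≤ n) :
    (intervalFin n lo hi).image Fin.val = Finset.Ico lo hi := by
  ext x
  simp only [intervalFin, Finset.mem_image, Finset.mem_filter, Finset.mem_univ, true_and,
    Finset.mem_Ico]
  exact ⟨by rintro ⟨a, ha, rfl⟩; exact ha, fun hx => ⟨⟨x, by omega⟩, hx, rfl⟩⟩

lemma card_intervalFin {lo hi : ℕ} (h : hi ≤ n) : #(intervalFin n lo hi) = hi - lo := by
  rw [← Finset.card_image_of_injective _ Fin.val_injective, image_val_intervalFin h,
    Nat.card_Ico]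

lemma two_mul_sum_val_intervalFin {lo hi : ℕ} (h : hi ≤ n) :
    2 * ∑ b ∈ intervalFin n lo hi, (b : ℕ) = (hi - lo) * (2 * lo + (hi - lo) - 1) := by
  have hsum : ∑ b ∈ intervalFin n lo hi, (b : ℕ) = ∑ j ∈ Finset.Ico lo hi, j := by
    rw [← image_val_intervalFin h, Finset.sum_image fun a _ b _ hab => Fin.val_injective hab]
  rw [hsum, Finset.sum_Ico_eq_sum_range, Finset.sum_add_distrib, Finset.sum_const,
    Finset.card_range, smul_eq_mul, mul_add, mul_comm 2 (∑ i ∈ _, _),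
    Finset.sum_range_id_mul_two]
  rcases Nat.eq_zero_or_pos (hi - lo) with h0 | hpos
  · simp [h0]
  · zify [hpos, show 1 ≤ 2 * lo + (hi - lo) by omega]
    ring

lemma intervalFin_zero_eq_univ (n : ℕ) : intervalFin n 0 n = Finset.univ := by
  ext x
  simp [intervalFin]

lemma intervalFin_union {a b d : ℕ} (hab : a ≤ b) (hbd : b ≤ d) :
    intervalFin n a b ∪ intervalFin n b d = intervalFin n a d := by
  ext x
  simp only [intervalFin, Finset.mem_union, Finset.mem_filter, Finset.mem_univ, true_and]
  omega

lemma disjoint_intervalFin (a b d : ℕ) : Disjoint (intervalFin n a b) (intervalFin n b d) := by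
  rw [Finset.disjoint_left]
  intro x
  simp only [intervalFin, Finset.mem_filter, Finset.mem_univ, true_and]
  omega

lemma sum_sum_intervalFin {M : Type*} [AddCommMonoid M] (f : Fin n → M) {k : ℕ}
    {c : Fin (k + 1) → ℕ} (hc : Monotone c) :
    ∑ u : Fin k, ∑ a ∈ intervalFin n (c u.castSucc) (c u.succ), f a =
      ∑ a ∈ intervalFin n (c 0) (c (Fin.last k)), f a := by
  induction k with
  | zero =>
    refine (Finset.sum_eq_zero fun a ha => ?_).symm
    simp only [intervalFin, Finset.mem_filter, Fin.last_zero] at ha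
    omega
  | succ k ih =>
    have ih' := ih (c := c ∘ Fin.castSucc) (hc.comp Fin.strictMono_castSucc.monotone)
    simp only [Function.comp_apply, Fin.castSucc_zero] at ih'
    rw [Fin.sum_univ_castSucc]
    simp only [Fin.succ_castSucc]
    rw [ih', ← Finset.sum_union (disjoint_intervalFin _ _ _),
      intervalFin_union (hc (Fin.zero_le _)) (hc (Fin.castSucc_le_succ _)), Fin.succ_last]

end Intervals

lemma card_filter_lt_mul_card_le {α : Type*} [LinearOrder α] {B B' : Finset α}
    (h : ∀ b ∈ B, ∀ b' ∈ B', b ≤ b') (t : α) :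
    #{b ∈ B | t < b} * #B' ≤ #{b' ∈ B' | t < b'} * #B := by
  by_cases hfull : ∀ b' ∈ B', t < b'
  · rw [Finset.filter_true_of_mem hfull, mul_comm]
    exact Nat.mul_le_mul_left _ (Finset.card_filter_le _ _)
  · push Not at hfull
    obtain ⟨b', hb', hle⟩ := hfull
    rw [Finset.filter_false_of_mem fun b hb => not_lt.2 ((h b hb b' hb').trans hle)]
    simp

section Edges

variable {n : ℕ} (σ : Equiv.Perm (Fin n))

lemma edgeCount_eq_sum_left (A B : Finset (Fin n)) :
    edgeCount σ A B = ∑ a ∈ A, #{b ∈ B | σ a < b} := by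
  simp only [edgeCount, Finset.card_filter, Finset.sum_product, Fin.lt_def]

lemma edgeCount_eq_sum_right (A B : Finset (Fin n)) :
    edgeCount σ A B = ∑ b ∈ B, #{a ∈ A | σ a < b} := by
  simp only [edgeCount, Finset.card_filter, Finset.sum_product_right, Fin.lt_def]

lemma edgeCount_le_card_mul (A B : Finset (Fin n)) : edgeCount σ A B ≤ #A * #B :=
  (Finset.card_filter_le _ _).trans (Finset.card_product _ _).le

lemma edgeCount_mul_card_le_of_le {A B B' : Finset (Fin n)} (h : ∀ b ∈ B, ∀ b' ∈ B', b ≤ b') :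
    edgeCount σ A B * #B' ≤ edgeCount σ A B' * #B := by
  rw [edgeCount_eq_sum_left, edgeCount_eq_sum_left, Finset.sum_mul, Finset.sum_mul]
  exact Finset.sum_le_sum fun a _ => card_filter_lt_mul_card_le h (σ a)

lemma card_filter_perm_lt (b : Fin n) : #{a | σ a < b} = b := by
  rw [Finset.card_filter, Equiv.sum_comp σ fun a => if a < b then 1 else 0, ← Finset.card_filter]
  simp [Finset.filter_gt_eq_Iio]

lemma sum_edgeCount_intervalFin {k : ℕ} {c : Fin (k + 1) → ℕ} (hc : Monotone c) (h0 : c 0 = 0)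
    (hlast : c (Fin.last k) = n) (B : Finset (Fin n)) :
    ∑ u : Fin k, edgeCount σ (intervalFin n (c u.castSucc) (c u.succ)) B = ∑ b ∈ B, (b : ℕ) := by
  simp only [edgeCount_eq_sum_left]
  rw [sum_sum_intervalFin _ hc, h0, hlast, intervalFin_zero_eq_univ, ← edgeCount_eq_sum_left,
    edgeCount_eq_sum_right]
  exact Finset.sum_congr rfl fun b _ => card_filter_perm_lt σ b

end Edges

lemma mul_le_and_le_mul_of_increments {k a b : ℕ} {c : Fin (k + 1) → ℕ} (h0 : c 0 = 0)
    (hlo : ∀ i : Fin k, c i.castSucc + a ≤ c i.succ)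
    (hhi : ∀ i : Fin k, c i.succ ≤ c i.castSucc + b) (i : Fin (k + 1)) :
    i * a ≤ c i ∧ c i ≤ i * b := by
  induction i using Fin.induction with
  | zero => simp [h0]
  | succ i ih =>
    simp only [Fin.val_succ, Fin.val_castSucc, add_one_mul] at ih ⊢
    have := hlo i
    have := hhi i
    omega

/-- The part `C_{u+1}` of the partition with cut points `c` (parts are 1-based in the paper). -/
def block (n : ℕ) {k : ℕ} (c : Fin (k + 1) → ℕ) (u : Fin k) : Finset (Fin n) :=
  intervalFin n (c u.castSucc) (c u.succ)

section PartMatrix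

variable {n k : ℕ} (σ : Equiv.Perm (Fin n)) {c : Fin (k + 1) → ℕ}

lemma partMatrix_apply (u w : Fin k) :
    partMatrix σ c u w =
      (edgeCount σ (block n c u) (block n c w) : ℝ) / (#(block n c u) * #(block n c w)) :=
  rfl

lemma partMatrix_mem_Icc (u w : Fin k) : partMatrix σ c u w ∈ Set.Icc 0 1 := by
  rw [partMatrix_apply]
  exact ⟨by positivity, div_le_one_of_le₀ (mod_cast edgeCount_le_card_mul σ _ _) (by positivity)⟩

lemma monotone_partMatrix (hc : Monotone c) (hpos : ∀ w, 0 < #(block n c w)) (u : Fin k) :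
    Monotone (partMatrix σ c u) := by
  intro w w' hww'
  rcases hww'.eq_or_lt with rfl | hlt
  · rfl
  have hle : ∀ b ∈ block n c w, ∀ b' ∈ block n c w', b ≤ b' := by
    have : c w.succ ≤ c w'.castSucc := hc (Fin.succ_le_castSucc_iff.2 hlt)
    simp only [block, intervalFin, Finset.mem_filter, Finset.mem_univ, true_and, Fin.le_def]
    omega
  have key : (edgeCount σ (block n c u) (block n c w) : ℝ) * #(block n c w') ≤
      edgeCount σ (block n c u) (block n c w') * #(block n c w) :=
    mod_cast edgeCount_mul_card_le_of_le σ hle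
  have hpos' (v : Fin k) : (0 : ℝ) < #(block n c v) := mod_cast hpos v
  rw [partMatrix_apply, partMatrix_apply,
    div_le_div_iff₀ (mul_pos (hpos' u) (hpos' w)) (mul_pos (hpos' u) (hpos' w')),
    mul_left_comm, mul_left_comm (edgeCount σ _ _ : ℝ)]
  exact mul_le_mul_of_nonneg_left key (hpos' u).le

end PartMatrix

lemma sum_div_mul_mem_Icc {ι : Type*} (S : Finset ι) {e d : ι → ℝ} {s : ℝ}
    (he : ∀ i ∈ S, 0 ≤ e i) (hd : ∀ i ∈ S, d i ∈ Set.Icc (s - 1) (s + 1)) (hs : 1 < s) :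
    ∑ i ∈ S, e i / (d i * s) ∈
      Set.Icc ((∑ i ∈ S, e i) / ((s + 1) * s)) ((∑ i ∈ S, e i) / ((s - 1) * s)) := by
  rw [Finset.sum_div, Finset.sum_div]
  constructor <;> refine Finset.sum_le_sum fun i hi => ?_ <;> obtain ⟨hlo, hhi⟩ := hd i hi
  · exact div_le_div_of_nonneg_left (he i hi) (by nlinarith) (by nlinarith)
  · exact div_le_div_of_nonneg_left (he i hi) (by nlinarith) (by nlinarith)

/-- `2 E = s (2 L + s - 1)` says that `E` is the sum of the `s` integers `L, …, L + s - 1`. -/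
lemma le_div_of_two_mul_eq {E s L w : ℝ} (hE : 2 * E = s * (2 * L + s - 1)) (hw : 0 ≤ w)
    (hs : 4 * w + 1 ≤ s) (hL : w * (s - 1) ≤ L) : w ≤ E / ((s + 1) * s) := by
  rw [le_div_iff₀ (by nlinarith)]
  nlinarith

lemma div_le_of_two_mul_eq {E s L w : ℝ} (hE : 2 * E = s * (2 * L + s - 1)) (hw : 0 ≤ w)
    (hs : 4 * w + 1 < s) (hL : L ≤ w * (s + 1)) : E / ((s - 1) * s) ≤ w + 1 := by
  rw [div_le_iff₀ (by nlinarith)]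
  nlinarith

namespace IsEquipartition

variable {n k : ℕ} {c : Fin (k + 1) → ℕ}

lemma cut_le (hc : IsEquipartition n c) (i : Fin (k + 1)) : c i ≤ n :=
  hc.2.2.1 ▸ hc.1 (Fin.le_last i)

lemma card_block (hc : IsEquipartition n c) (u : Fin k) :
    #(block n c u) = c u.succ - c u.castSucc :=
  card_intervalFin (hc.cut_le _)

lemma card_block_le (hc : IsEquipartition n c) (u w : Fin k) :
    #(block n c u) ≤ #(block n c w) + 1 := by
  have := hc.2.2.2 u w
  simp only [block]
  omega

lemma mul_le_and_le_mul (hc : IsEquipartition n c) (w : Fin k) (i : Fin (k + 1)) :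
    i * (#(block n c w) - 1) ≤ c i ∧ c i ≤ i * (#(block n c w) + 1) := by
  refine mul_le_and_le_mul_of_increments hc.2.1 (fun u => ?_) (fun u => ?_) i <;>
  · have := hc.card_block u
    have := hc.card_block_le u w
    have := hc.card_block_le w u
    have := hc.1 (Fin.castSucc_le_succ u)
    omega

lemma four_mul_le_card_block (hc : IsEquipartition n c) (hn : 4 * k ^ 2 < n) (w : Fin k) :
    4 * k ≤ #(block n c w) := by
  have h := (hc.mul_le_and_le_mul w (Fin.last k)).2
  rw [hc.2.2.1, Fin.val_last] at h
  nlinarith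

lemma sum_partMatrix_mem_Icc (σ : Equiv.Perm (Fin n)) (hc : IsEquipartition n c)
    (hbig : ∀ w, 4 * k ≤ #(block n c w)) (w : Fin k) :
    ∑ u, partMatrix σ c u w ∈ Set.Icc (w : ℝ) (w + 1) := by
  set s := #(block n c w) with hs_def
  have hs : 4 * (w : ℕ) + 4 ≤ s := by have := hbig w; omega
  have hsR : (4 * w + 4 : ℝ) ≤ s := mod_cast hs
  have hE : 2 * ∑ u, (edgeCount σ (block n c u) (block n c w) : ℝ) =
      s * (2 * c w.castSucc + s - 1) := by
    have h := two_mul_sum_val_intervalFin (hc.cut_le w.succ) (lo := c w.castSucc)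
    rw [← sum_edgeCount_intervalFin σ hc.1 hc.2.1 hc.2.2.1, ← hc.card_block, ← hs_def] at h
    zify [show 1 ≤ 2 * c w.castSucc + s by omega] at h
    exact_mod_cast h
  have hL : (w : ℝ) * (s - 1) ≤ c w.castSucc ∧ (c w.castSucc : ℝ) ≤ w * (s + 1) := by
    have h := hc.mul_le_and_le_mul w w.castSucc
    rw [Fin.val_castSucc, ← hs_def] at h
    zify [show 1 ≤ s by omega] at h
    exact_mod_cast h
  have hcard (u : Fin k) : (#(block n c u) : ℝ) ∈ Set.Icc ((s : ℝ) - 1) (s + 1) := by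
    have h1 : (s : ℝ) ≤ #(block n c u) + 1 := mod_cast hc.card_block_le w u
    have h2 : (#(block n c u) : ℝ) ≤ s + 1 := mod_cast hc.card_block_le u w
    exact ⟨by linarith, h2⟩
  have hsum := sum_div_mul_mem_Icc Finset.univ
    (e := fun u => (edgeCount σ (block n c u) (block n c w) : ℝ)) (fun _ _ => by positivity)
    (fun u _ => hcard u) (by linarith)
  simp only [partMatrix_apply]
  exact ⟨(le_div_of_two_mul_eq hE (by positivity) (by linarith) hL.1).trans hsum.1,
    hsum.2.trans (div_le_of_two_mul_eq hE (by positivity) (by linarith) hL.2)⟩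

end IsEquipartition

/-- the partition matrix of a permutation with respect to an
equitable `k`-partition of `[n]`, `n > 4k²`, is a weighted permutation. -/
theorem partMatrix_is_weightedPerm {n k : ℕ} (σ : Equiv.Perm (Fin n))
    (c : Fin (k + 1) → ℕ) (hpart : IsEquipartition n c) (hn : 4 * k ^ 2 < n) :
    WeightedPerm (partMatrix σ c) := by
  have hbig := hpart.four_mul_le_card_block hn
  have hpos (w : Fin k) : 0 < #(block n c w) := by
    have := hbig w
    have := w.pos
    omega
  exact ⟨partMatrix_mem_Icc σ, monotone_partMatrix σ hpart.1 hpos,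
    hpart.sum_partMatrix_mem_Icc σ hbig⟩

end
end

section
/- For every ε>0 there exists k₀>0 such that for every k>k₀ and every n>2k the following holds: if P is an equitable k-partition of [n] and σ:[n]→[n] is a permutation, then d_□(Q_σ, K(P,Q_{σ,P})) ≤ ε, where K(P,Q_{σ,P}) is the blow-up of the partition matrix Q_{σ,P} with respect to P. -/
open MeasureTheory Filter Set

open scoped Classical

noncomputable section

namespace EPWR

variable {n k : ℕ}

/-- The `i`-th class of the partition. -/
def C (c : Fin (k + 1) → ℕ) (i : Fin k) : Finset (Fin n) :=
  intervalFin n (c i.castSucc) (c i.succ)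

lemma mem_C {c : Fin (k + 1) → ℕ} {i : Fin k} {x : Fin n} :
    x ∈ C (n := n) c i ↔ c i.castSucc ≤ (x : ℕ) ∧ (x : ℕ) < c i.succ := by
  simp [C, intervalFin]

lemma exists_mem_C {c : Fin (k + 1) → ℕ} (hc : IsEquipartition n c) (x : Fin n) :
    ∃ i, x ∈ C (n := n) c i := by
  obtain ⟨hmono, h0, hlast, -⟩ := hc
  classical
  set F : Finset (Fin (k + 1)) := Finset.univ.filter (fun i => (c i : ℕ) ≤ (x : ℕ)) with hF
  have h0F : (0 : Fin (k + 1)) ∈ F := by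
    simp [hF, h0]
  obtain ⟨i₀, hi₀F, hmax⟩ := F.exists_max_image id ⟨0, h0F⟩
  have hci₀ : c i₀ ≤ (x : ℕ) := (Finset.mem_filter.1 hi₀F).2
  have hne : i₀ ≠ Fin.last k := by
    intro h
    rw [h, hlast] at hci₀
    exact absurd x.isLt (not_lt.2 hci₀)
  have hlt : (i₀ : ℕ) < k := by
    rcases lt_or_eq_of_le (Nat.lt_succ_iff.1 i₀.isLt) with h | h
    · exact h
    · exact absurd (Fin.ext h : i₀ = Fin.last k) hne
  refine ⟨⟨i₀, hlt⟩, mem_C.2 ⟨?_, ?_⟩⟩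
  · exact hci₀
  · by_contra hcon
    push_neg at hcon
    have hmem : (⟨(i₀ : ℕ) + 1, Nat.succ_lt_succ hlt⟩ : Fin (k + 1)) ∈ F := by
      simpa [hF] using hcon
    have h2 : (i₀ : ℕ) + 1 ≤ (i₀ : ℕ) := hmax _ hmem
    omega

lemma C_unique {c : Fin (k + 1) → ℕ} (hmono : Monotone c) {i j : Fin k} {x : Fin n}
    (hi : x ∈ C (n := n) c i) (hj : x ∈ C (n := n) c j) : i = j := by
  rw [mem_C] at hi hj
  by_contra hne
  rcases lt_or_gt_of_ne hne with h | h
  · have : c i.succ ≤ c j.castSucc := hmono (by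
      rw [Fin.le_def]; simp only [Fin.val_succ, Fin.coe_castSucc]
      exact Fin.lt_iff_val_lt_val.1 h)
    omega
  · have : c j.succ ≤ c i.castSucc := hmono (by
      rw [Fin.le_def]; simp only [Fin.val_succ, Fin.coe_castSucc]
      exact Fin.lt_iff_val_lt_val.1 h)
    omega

/-- The class of `x`. -/
def clsOf {c : Fin (k + 1) → ℕ} (hc : IsEquipartition n c) (x : Fin n) : Fin k :=
  (exists_mem_C hc x).choose

lemma clsOf_spec {c : Fin (k + 1) → ℕ} (hc : IsEquipartition n c) (x : Fin n) :
    x ∈ C c (clsOf hc x) := (exists_mem_C hc x).choose_spec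

lemma clsOf_eq {c : Fin (k + 1) → ℕ} (hc : IsEquipartition n c) {x : Fin n} {u : Fin k}
    (hx : x ∈ C (n := n) c u) : clsOf hc x = u :=
  C_unique hc.1 (clsOf_spec hc x) hx


lemma blowup_eq {c : Fin (k + 1) → ℕ} (hc : IsEquipartition n c) (Q : Fin k → Fin k → ℝ)
    (x y : Fin n) : blowup c Q x y = Q (clsOf hc x) (clsOf hc y) := by
  have hx : ∃ i : Fin k, c i.castSucc ≤ (x : ℕ) ∧ (x : ℕ) < c i.succ :=
    ⟨_, mem_C.1 (clsOf_spec hc x)⟩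
  have hy : ∃ i : Fin k, c i.castSucc ≤ (y : ℕ) ∧ (y : ℕ) < c i.succ :=
    ⟨_, mem_C.1 (clsOf_spec hc y)⟩
  rw [blowup, dif_pos hx, dif_pos hy]
  exact congrArg₂ Q (C_unique hc.1 (mem_C.2 hx.choose_spec) (clsOf_spec hc x))
    (C_unique hc.1 (mem_C.2 hy.choose_spec) (clsOf_spec hc y))

lemma filter_clsOf {c : Fin (k + 1) → ℕ} (hc : IsEquipartition n c) (u : Fin k) :
    Finset.univ.filter (fun x : Fin n => clsOf hc x = u) = C (n := n) c u := by
  ext x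
  simp only [Finset.mem_filter, Finset.mem_univ, true_and]
  exact ⟨fun h => h ▸ clsOf_spec hc x, fun h => clsOf_eq hc h⟩

lemma sum_card_C {c : Fin (k + 1) → ℕ} (hc : IsEquipartition n c) :
    ∑ u : Fin k, (C (n := n) c u).card = n := by
  have h := Finset.card_eq_sum_card_fiberwise
    (f := clsOf hc) (s := (Finset.univ : Finset (Fin n))) (t := Finset.univ)
    (fun x _ => Finset.mem_univ _)
  simp only [filter_clsOf hc] at h
  rw [← h, Finset.card_univ, Fintype.card_fin]

lemma card_preimage_C {c : Fin (k + 1) → ℕ} (σ : Equiv.Perm (Fin n)) (w : Fin k) :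
    (Finset.univ.filter fun x : Fin n => σ x ∈ C (n := n) c w).card = (C (n := n) c w).card := by
  apply Finset.card_bij (fun x _ => σ x)
  · intro x hx; exact (Finset.mem_filter.1 hx).2
  · intro x hx y hy h; exact σ.injective h
  · intro y hy
    exact ⟨σ.symm y, Finset.mem_filter.2 ⟨Finset.mem_univ _, by simpa using hy⟩, by simp⟩

lemma card_C_le {c : Fin (k + 1) → ℕ} (hc : IsEquipartition n c) (hk : 0 < k) (u : Fin k) :
    (C (n := n) c u).card ≤ n / k + 1 := by
  obtain ⟨u₀, -, hmin⟩ := Finset.exists_min_image Finset.univ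
    (fun u => (C (n := n) c u).card) ⟨⟨0, hk⟩, Finset.mem_univ _⟩
  have hsum : Finset.univ.card • (C (n := n) c u₀).card ≤ ∑ v : Fin k, (C c v).card :=
    Finset.card_nsmul_le_sum _ _ _ (fun v _ => hmin v (Finset.mem_univ v))
  rw [sum_card_C hc, Finset.card_univ, Fintype.card_fin, smul_eq_mul] at hsum
  have h0 : (C (n := n) c u₀).card ≤ n / k := Nat.le_div_iff_mul_le hk |>.2 (by rwa [Nat.mul_comm])
  have h1 : ((C (n := n) c u).card : ℤ) - ((C (n := n) c u₀).card : ℤ) ≤ 1 := hc.2.2.2 u u₀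
  omega

lemma card_C_pos {c : Fin (k + 1) → ℕ} (hc : IsEquipartition n c) (hk : 0 < k)
    (hn : 2 * k < n) (u : Fin k) : 0 < (C (n := n) c u).card := by
  obtain ⟨u₁, -, hmax⟩ := Finset.exists_max_image Finset.univ
    (fun u => (C (n := n) c u).card) ⟨⟨0, hk⟩, Finset.mem_univ _⟩
  have hsum : ∑ v : Fin k, (C c v).card ≤ Finset.univ.card • (C (n := n) c u₁).card :=
    Finset.sum_le_card_nsmul _ _ _ (fun v _ => hmax v (Finset.mem_univ v))
  rw [sum_card_C hc, Finset.card_univ, Fintype.card_fin, smul_eq_mul] at hsum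
  have h2 : 2 < (C (n := n) c u₁).card := by
    by_contra h
    push_neg at h
    have : k * (C (n := n) c u₁).card ≤ k * 2 := Nat.mul_le_mul_left k h
    omega
  have h1 : ((C (n := n) c u₁).card : ℤ) - ((C (n := n) c u).card : ℤ) ≤ 1 := hc.2.2.2 u₁ u
  omega


lemma abs_sub_le_one' {a b : ℝ} (h1 : 0 ≤ a) (h2 : a ≤ 1) (h3 : 0 ≤ b) (h4 : b ≤ 1) :
    |a - b| ≤ 1 := by
  rw [abs_le]; constructor <;> linarith

lemma edgeCount_eq (σ : Equiv.Perm (Fin n)) (A B : Finset (Fin n)) :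
    edgeCount σ A B = ∑ x ∈ A, (B.filter fun y : Fin n => (σ x : ℕ) < (y : ℕ)).card := by
  rw [edgeCount, Finset.card_filter, Finset.sum_product]
  exact Finset.sum_congr rfl fun x _ => (Finset.card_filter _ _).symm

lemma partMatrix_nonneg (σ : Equiv.Perm (Fin n)) (c : Fin (k + 1) → ℕ) (u w : Fin k) :
    0 ≤ partMatrix σ c u w := by
  rw [partMatrix]
  positivity

lemma partMatrix_eq {c : Fin (k + 1) → ℕ} (σ : Equiv.Perm (Fin n)) (u w : Fin k) :
    partMatrix σ c u w = (edgeCount σ (C (n := n) c u) (C (n := n) c w) : ℝ) /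
      (((C (n := n) c u).card : ℝ) * ((C (n := n) c w).card : ℝ)) := rfl

lemma partMatrix_le_one {c : Fin (k + 1) → ℕ} (σ : Equiv.Perm (Fin n)) {u w : Fin k}
    (hu : 0 < (C (n := n) c u).card) (hw : 0 < (C (n := n) c w).card) :
    partMatrix σ c u w ≤ 1 := by
  rw [partMatrix_eq]
  rw [div_le_one (by positivity)]
  have h : edgeCount σ (C (n := n) c u) (C (n := n) c w) ≤ (C (n := n) c u).card * (C (n := n) c w).card := by
    calc edgeCount σ (C (n := n) c u) (C (n := n) c w) ≤ ((C (n := n) c u) ×ˢ (C (n := n) c w)).card :=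
          Finset.card_filter_le _ _
      _ = _ := Finset.card_product _ _
  exact_mod_cast h

lemma key_pointwise {c : Fin (k + 1) → ℕ} (σ : Equiv.Perm (Fin n)) {w : Fin k} {j : Fin n}
    (hj : j ∈ C (n := n) c w) (hw : 0 < (C (n := n) c w).card) (x : Fin n) :
    |(if (σ x : ℕ) < (j : ℕ) then (1 : ℝ) else 0) -
        (((C (n := n) c w).filter fun y : Fin n => (σ x : ℕ) < (y : ℕ)).card : ℝ) / (C (n := n) c w).card| ≤
      if σ x ∈ C (n := n) c w then 1 else 0 := by
  by_cases hmem : σ x ∈ C (n := n) c w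
  · rw [if_pos hmem]
    have hle : (((C (n := n) c w).filter fun y : Fin n => (σ x : ℕ) < (y : ℕ)).card : ℝ) ≤ (C (n := n) c w).card := by
      exact_mod_cast Finset.card_filter_le _ _
    have hwR : (0 : ℝ) < (C (n := n) c w).card := by exact_mod_cast hw
    refine abs_sub_le_one' ?_ ?_ (by positivity) (by rw [div_le_one hwR]; exact hle)
    · split <;> norm_num
    · split <;> norm_num
  · rw [if_neg hmem]
    rcases lt_or_ge (σ x : ℕ) (c w.castSucc) with h | h
    · have hlt : (σ x : ℕ) < (j : ℕ) := by
        have := (mem_C.1 hj).1; omega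
      have hfilter : (C (n := n) c w).filter (fun y : Fin n => (σ x : ℕ) < (y : ℕ)) = C (n := n) c w :=
        Finset.filter_true_of_mem (fun y hy => by have := (mem_C.1 hy).1; omega)
      rw [if_pos hlt, hfilter, div_self (by exact_mod_cast hw.ne')]
      simp
    · have h2 : c w.succ ≤ (σ x : ℕ) := by
        by_contra hcon
        push_neg at hcon
        exact hmem (mem_C.2 ⟨h, hcon⟩)
      have hnlt : ¬ ((σ x : ℕ) < (j : ℕ)) := by
        have := (mem_C.1 hj).2; omega
      have hfilter : (C (n := n) c w).filter (fun y : Fin n => (σ x : ℕ) < (y : ℕ)) = ∅ :=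
        Finset.filter_false_of_mem (fun y hy => by have := (mem_C.1 hy).2; omega)
      rw [if_neg hnlt, hfilter]
      simp

lemma full_class_bound {c : Fin (k + 1) → ℕ} (σ : Equiv.Perm (Fin n)) {u w : Fin k}
    (hu : 0 < (C (n := n) c u).card) (hw : 0 < (C (n := n) c w).card) {j : Fin n}
    (hj : j ∈ C (n := n) c w) :
    |∑ x ∈ C (n := n) c u, ((if (σ x : ℕ) < (j : ℕ) then (1 : ℝ) else 0) - partMatrix σ c u w)| ≤
      (((C (n := n) c u).filter fun x => σ x ∈ C (n := n) c w).card : ℝ) := by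
  have huR : (0 : ℝ) < (C (n := n) c u).card := by exact_mod_cast hu
  have hwR : (0 : ℝ) < (C (n := n) c w).card := by exact_mod_cast hw
  have hP : ∑ x ∈ C (n := n) c u, partMatrix σ c u w =
      ∑ x ∈ C (n := n) c u, (((C (n := n) c w).filter fun y : Fin n => (σ x : ℕ) < (y : ℕ)).card : ℝ) / (C (n := n) c w).card := by
    rw [Finset.sum_const, nsmul_eq_mul, partMatrix_eq, edgeCount_eq, ← Finset.sum_div]
    push_cast
    field_simp
  calc |∑ x ∈ C (n := n) c u, ((if (σ x : ℕ) < (j : ℕ) then (1 : ℝ) else 0) - partMatrix σ c u w)|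
      = |∑ x ∈ C (n := n) c u, ((if (σ x : ℕ) < (j : ℕ) then (1 : ℝ) else 0) -
          (((C (n := n) c w).filter fun y : Fin n => (σ x : ℕ) < (y : ℕ)).card : ℝ) / (C (n := n) c w).card)| := by
        rw [Finset.sum_sub_distrib, Finset.sum_sub_distrib, hP]
    _ ≤ ∑ x ∈ C (n := n) c u, |(if (σ x : ℕ) < (j : ℕ) then (1 : ℝ) else 0) -
          (((C (n := n) c w).filter fun y : Fin n => (σ x : ℕ) < (y : ℕ)).card : ℝ) / (C (n := n) c w).card| :=
        Finset.abs_sum_le_sum_abs _ _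
    _ ≤ ∑ x ∈ C (n := n) c u, (if σ x ∈ C (n := n) c w then (1 : ℝ) else 0) :=
        Finset.sum_le_sum (fun x _ => key_pointwise σ hj hw x)
    _ = (((C (n := n) c u).filter fun x => σ x ∈ C (n := n) c w).card : ℝ) := by
        rw [Finset.sum_boole]


lemma column_bound {c : Fin (k + 1) → ℕ} (hc : IsEquipartition n c) (hk : 0 < k)
    (hn : 2 * k < n) (σ : Equiv.Perm (Fin n)) (lo hi : Fin n) (j : Fin n) :
    |∑ x ∈ Finset.Icc lo hi, (QofPerm σ x j - blowup c (partMatrix σ c) x j)| ≤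
      3 * ((n / k + 1 : ℕ) : ℝ) := by
  classical
  set M : ℕ := n / k + 1 with hM
  set w : Fin k := clsOf hc j with hwdef
  have hjw : j ∈ C (n := n) c w := clsOf_spec hc j
  have hwpos : 0 < (C (n := n) c w).card := card_C_pos hc hk hn w
  set S : Finset (Fin n) := Finset.Icc lo hi with hS
  set f : Fin n → ℝ := fun x =>
    (if (σ x : ℕ) < (j : ℕ) then (1 : ℝ) else 0) - partMatrix σ c (clsOf hc x) w with hf
  have hfeq : ∀ x, QofPerm σ x j - blowup c (partMatrix σ c) x j = f x := by
    intro x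
    rw [hf, blowup_eq hc, ← hwdef]
    simp only [QofPerm]
  have hsplit : ∑ x ∈ S, f x = ∑ u : Fin k, ∑ x ∈ S.filter (fun x => clsOf hc x = u), f x :=
    (Finset.sum_fiberwise_of_maps_to (fun x _ => Finset.mem_univ _) f).symm
  have hbound : ∀ u : Fin k,
      |∑ x ∈ S.filter (fun x => clsOf hc x = u), f x| ≤
        (((C (n := n) c u).filter fun x => σ x ∈ C (n := n) c w).card : ℝ) +
          (if u = clsOf hc lo ∨ u = clsOf hc hi then (M : ℝ) else 0) := by
    intro u
    have hupos : 0 < (C (n := n) c u).card := card_C_pos hc hk hn u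
    set T := S.filter (fun x => clsOf hc x = u) with hT
    have hTsub : T ⊆ C (n := n) c u := by
      intro x hx
      exact (Finset.mem_filter.1 hx).2 ▸ clsOf_spec hc x
    have hfT : ∀ x ∈ T, f x =
        (if (σ x : ℕ) < (j : ℕ) then (1 : ℝ) else 0) - partMatrix σ c u w := by
      intro x hx
      rw [hf]
      simp only []
      rw [(Finset.mem_filter.1 hx).2]
    by_cases hfull : T = C (n := n) c u
    · calc |∑ x ∈ T, f x|
          = |∑ x ∈ C (n := n) c u,
              ((if (σ x : ℕ) < (j : ℕ) then (1 : ℝ) else 0) - partMatrix σ c u w)| := by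
            rw [Finset.sum_congr hfull (fun x hx => hfT x (hfull ▸ hx))]
        _ ≤ (((C (n := n) c u).filter fun x => σ x ∈ C (n := n) c w).card : ℝ) :=
            full_class_bound σ hupos hwpos hjw
        _ ≤ _ := le_add_of_nonneg_right (by split <;> positivity)
    · by_cases hne : T = ∅
      · rw [hne, Finset.sum_empty, abs_zero]
        exact add_nonneg (by positivity) (by split <;> positivity)
      · obtain ⟨y, hy⟩ := Finset.nonempty_iff_ne_empty.2 hne
        have hyS : y ∈ S := (Finset.mem_filter.1 hy).1
        have hyCu := hTsub hy
        obtain ⟨z, hzCu, hzT⟩ := Finset.exists_of_ssubset (ssubset_of_subset_of_ne hTsub hfull)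
        have hzS : z ∉ S := fun h => hzT (Finset.mem_filter.2 ⟨h, clsOf_eq hc hzCu⟩)
        rw [hS, Finset.mem_Icc] at hzS hyS
        rw [mem_C] at hyCu hzCu
        have hylo : (lo : ℕ) ≤ (y : ℕ) := hyS.1
        have hyhi : (y : ℕ) ≤ (hi : ℕ) := hyS.2
        have hcase : u = clsOf hc lo ∨ u = clsOf hc hi := by
          by_cases hlz : (z : ℕ) < (lo : ℕ)
          · left
            exact (clsOf_eq hc (mem_C.2 ⟨by omega, by omega⟩)).symm
          · have hz2 : (hi : ℕ) < (z : ℕ) := by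
              by_contra hcon
              push_neg at hcon
              exact hzS ⟨by rw [Fin.le_def]; omega, by rw [Fin.le_def]; omega⟩
            right
            exact (clsOf_eq hc (mem_C.2 ⟨by omega, by omega⟩)).symm
        have hcard : |∑ x ∈ T, f x| ≤ (T.card : ℝ) := by
          calc |∑ x ∈ T, f x| ≤ ∑ x ∈ T, |f x| := Finset.abs_sum_le_sum_abs _ _
            _ ≤ ∑ _x ∈ T, (1 : ℝ) := Finset.sum_le_sum (fun x hx => by
                rw [hfT x hx]
                exact abs_sub_le_one' (by split <;> norm_num) (by split <;> norm_num)
                  (partMatrix_nonneg σ c u w) (partMatrix_le_one σ hupos hwpos))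
            _ = (T.card : ℝ) := by simp
        have hTM : (T.card : ℝ) ≤ (M : ℝ) := by
          exact_mod_cast le_trans (Finset.card_le_card hTsub) (card_C_le hc hk u)
        rw [if_pos hcase]
        have hA0 : (0 : ℝ) ≤
            (((C (n := n) c u).filter fun x => σ x ∈ C (n := n) c w).card : ℝ) := by positivity
        linarith
  have hA : ∑ u : Fin k,
      (((C (n := n) c u).filter fun x => σ x ∈ C (n := n) c w).card : ℝ) =
        ((C (n := n) c w).card : ℝ) := by
    have hfib : ∀ u : Fin k,
        (Finset.univ.filter fun x : Fin n => σ x ∈ C (n := n) c w).filter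
          (fun x => clsOf hc x = u) =
        (C (n := n) c u).filter (fun x => σ x ∈ C (n := n) c w) := by
      intro u
      ext x
      simp only [Finset.mem_filter, Finset.mem_univ, true_and]
      constructor
      · rintro ⟨h1, h2⟩; exact ⟨h2 ▸ clsOf_spec hc x, h1⟩
      · rintro ⟨h1, h2⟩; exact ⟨h2, clsOf_eq hc h1⟩
    have hcf := Finset.card_eq_sum_card_fiberwise (f := clsOf hc)
      (s := Finset.univ.filter fun x : Fin n => σ x ∈ C (n := n) c w) (t := Finset.univ)
      (fun x _ => Finset.mem_univ _)
    rw [card_preimage_C σ w] at hcf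
    simp only [hfib] at hcf
    rw [← Nat.cast_sum, ← hcf]
  have hB : ∑ u : Fin k, (if u = clsOf hc lo ∨ u = clsOf hc hi then (M : ℝ) else 0) ≤
      (M : ℝ) + (M : ℝ) := by
    calc ∑ u : Fin k, (if u = clsOf hc lo ∨ u = clsOf hc hi then (M : ℝ) else 0)
        ≤ ∑ u : Fin k, ((if u = clsOf hc lo then (M : ℝ) else 0) +
            (if u = clsOf hc hi then (M : ℝ) else 0)) := by
          refine Finset.sum_le_sum (fun u _ => ?_)
          by_cases h1 : u = clsOf hc lo <;> by_cases h2 : u = clsOf hc hi <;>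
            simp [h1, h2] <;> positivity
      _ = (M : ℝ) + (M : ℝ) := by
          rw [Finset.sum_add_distrib, Finset.sum_ite_eq', Finset.sum_ite_eq']
          simp
  have hwM : ((C (n := n) c w).card : ℝ) ≤ (M : ℝ) := by
    exact_mod_cast card_C_le hc hk w
  calc |∑ x ∈ Finset.Icc lo hi, (QofPerm σ x j - blowup c (partMatrix σ c) x j)|
      = |∑ u : Fin k, ∑ x ∈ S.filter (fun x => clsOf hc x = u), f x| := by
        rw [← hsplit, hS]
        exact congrArg abs (Finset.sum_congr rfl (fun x _ => hfeq x))
    _ ≤ ∑ u : Fin k, |∑ x ∈ S.filter (fun x => clsOf hc x = u), f x| :=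
        Finset.abs_sum_le_sum_abs _ _
    _ ≤ ∑ u : Fin k,
          ((((C (n := n) c u).filter fun x => σ x ∈ C (n := n) c w).card : ℝ) +
            (if u = clsOf hc lo ∨ u = clsOf hc hi then (M : ℝ) else 0)) :=
        Finset.sum_le_sum (fun u _ => hbound u)
    _ = ((C (n := n) c w).card : ℝ) +
          ∑ u : Fin k, (if u = clsOf hc lo ∨ u = clsOf hc hi then (M : ℝ) else 0) := by
        rw [Finset.sum_add_distrib, hA]
    _ ≤ 3 * (M : ℝ) := by linarith


lemma Qext_eq {Q : Fin n → Fin n → ℝ} {m : ℕ} (h1 : 1 ≤ m) (h2 : m ≤ n) (i : Fin n) :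
    Qext Q i m = Q i ⟨m - 1, by omega⟩ := by
  rw [Qext, dif_pos ⟨h1, h2⟩]

lemma Qext_top (Q : Fin n → Fin n → ℝ) (i : Fin n) : Qext Q i (n + 1) = 1 := by
  rw [Qext, dif_neg (by omega), if_neg (by omega)]

lemma colsum_bound {c : Fin (k + 1) → ℕ} (hc : IsEquipartition n c) (hk : 0 < k)
    (hn : 2 * k < n) (σ : Equiv.Perm (Fin n)) (lo hi : Fin n) {m : ℕ}
    (h1 : 1 ≤ m) (h2 : m ≤ n + 1) :
    |∑ x ∈ Finset.Icc lo hi,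
        (Qext (QofPerm σ) x m - Qext (blowup c (partMatrix σ c)) x m)| ≤
      3 * ((n / k + 1 : ℕ) : ℝ) := by
  rcases eq_or_lt_of_le h2 with hm | hm
  · have hz : ∀ x ∈ Finset.Icc lo hi,
        Qext (QofPerm σ) x m - Qext (blowup c (partMatrix σ c)) x m = 0 := by
      intro x _
      rw [hm, Qext_top, Qext_top]
      ring
    rw [Finset.sum_congr rfl hz, Finset.sum_const_zero, abs_zero]
    positivity
  · have h2' : m ≤ n := by omega
    have hcb := column_bound hc hk hn σ lo hi ⟨m - 1, by omega⟩
    calc |∑ x ∈ Finset.Icc lo hi,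
          (Qext (QofPerm σ) x m - Qext (blowup c (partMatrix σ c)) x m)|
        = |∑ x ∈ Finset.Icc lo hi,
            (QofPerm σ x ⟨m - 1, by omega⟩ -
              blowup c (partMatrix σ c) x ⟨m - 1, by omega⟩)| := by
          congr 1
          refine Finset.sum_congr rfl (fun x _ => ?_)
          rw [Qext_eq h1 h2', Qext_eq h1 h2']
      _ ≤ 3 * ((n / k + 1 : ℕ) : ℝ) := hcb

end EPWR
/-- weak regularity of equitable partitions — the adjacency matrix
`Q_σ` is close in rectangular distance to the blow-up of the partition matrix. -/
theorem equitable_partition_weakly_regular :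
    ∀ ε : ℝ, 0 < ε → ∃ k₀ : ℕ, 0 < k₀ ∧ ∀ k : ℕ, k₀ < k → ∀ n : ℕ, 2 * k < n →
      ∀ (c : Fin (k + 1) → ℕ) (σ : Equiv.Perm (Fin n)), IsEquipartition n c →
        rectDistW (QofPerm σ) (blowup c (partMatrix σ c)) ≤ ε := by
  intro ε hε
  refine ⟨max 1 ⌈9 / ε⌉₊, lt_of_lt_of_le one_pos (le_max_left _ _), ?_⟩
  intro k hk n hn c σ hc
  have hk0 : 0 < k := lt_of_lt_of_le one_pos (le_of_lt (lt_of_le_of_lt (le_max_left _ _) hk))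
  have hn0 : 0 < n := by omega
  have hkR : (0 : ℝ) < k := by exact_mod_cast hk0
  have hnR : (0 : ℝ) < n := by exact_mod_cast hn0
  have hkε : 9 / ε < (k : ℝ) := by
    have h1 : (⌈9 / ε⌉₊ : ℝ) < k := by
      exact_mod_cast lt_of_le_of_lt (le_max_right 1 ⌈9 / ε⌉₊) hk
    exact lt_of_le_of_lt (Nat.le_ceil _) h1
  apply Real.sSup_le _ hε.le
  rintro d ⟨lo, hi, a, b, ha, hab, hb, rfl⟩
  set Q₂ := blowup c (partMatrix σ c) with hQ₂
  set M : ℕ := n / k + 1 with hMdef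
  have hsum : |∑ x ∈ Finset.Icc lo hi,
      ((Qext (QofPerm σ) x b - Qext (QofPerm σ) x a) - (Qext Q₂ x b - Qext Q₂ x a))| ≤
      6 * (M : ℝ) := by
    have heq : ∑ x ∈ Finset.Icc lo hi,
        ((Qext (QofPerm σ) x b - Qext (QofPerm σ) x a) - (Qext Q₂ x b - Qext Q₂ x a)) =
        (∑ x ∈ Finset.Icc lo hi, (Qext (QofPerm σ) x b - Qext Q₂ x b)) -
          ∑ x ∈ Finset.Icc lo hi, (Qext (QofPerm σ) x a - Qext Q₂ x a) := by
      rw [← Finset.sum_sub_distrib]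
      exact Finset.sum_congr rfl (fun x _ => by ring)
    rw [heq]
    calc |(∑ x ∈ Finset.Icc lo hi, (Qext (QofPerm σ) x b - Qext Q₂ x b)) -
          ∑ x ∈ Finset.Icc lo hi, (Qext (QofPerm σ) x a - Qext Q₂ x a)|
        ≤ |∑ x ∈ Finset.Icc lo hi, (Qext (QofPerm σ) x b - Qext Q₂ x b)| +
          |∑ x ∈ Finset.Icc lo hi, (Qext (QofPerm σ) x a - Qext Q₂ x a)| := abs_sub _ _
      _ ≤ 3 * (M : ℝ) + 3 * (M : ℝ) :=
          add_le_add (EPWR.colsum_bound hc hk0 hn σ lo hi (by omega) hb)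
            (EPWR.colsum_bound hc hk0 hn σ lo hi ha (by omega))
      _ = 6 * (M : ℝ) := by ring
  have hMle : (M : ℝ) ≤ (n : ℝ) / k + 1 := by
    have h := Nat.cast_div_le (α := ℝ) (m := n) (n := k)
    rw [hMdef]
    push_cast
    linarith
  calc (n : ℝ)⁻¹ * |∑ x ∈ Finset.Icc lo hi,
        ((Qext (QofPerm σ) x b - Qext (QofPerm σ) x a) - (Qext Q₂ x b - Qext Q₂ x a))|
      ≤ (n : ℝ)⁻¹ * (6 * (M : ℝ)) := by
        exact mul_le_mul_of_nonneg_left hsum (by positivity)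
    _ ≤ (n : ℝ)⁻¹ * (6 * ((n : ℝ) / k + 1)) := by
        apply mul_le_mul_of_nonneg_left _ (by positivity)
        linarith
    _ = 6 / (k : ℝ) + 6 / (n : ℝ) := by
        field_simp
    _ ≤ 6 / (k : ℝ) + 3 / (k : ℝ) := by
        have h2k : 2 * (k : ℝ) < n := by exact_mod_cast hn
        have : 6 / (n : ℝ) ≤ 3 / (k : ℝ) := by
          rw [div_le_div_iff₀ hnR hkR]
          linarith
        linarith
    _ = 9 / (k : ℝ) := by ring
    _ ≤ ε := by
        rw [div_le_iff₀ hkR]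
        have := (div_lt_iff₀ hε).1 hkε
        linarith

end
end

section
/- Let τ be a permutation of [m] and let n be a positive integer with n ≥ 2m. Then for all weighted permutations Q₁,Q₂ of order n, |t(τ,Q₁) − t(τ,Q₂)| ≤ 2m²·d_□(Q₁,Q₂). In particular, for permutations σ₁,σ₂ of [n], |t(τ,σ₁) − t(τ,σ₂)| ≤ 2m²·d_□(σ₁,σ₂). -/
open MeasureTheory Filter Set

open scoped Classical

noncomputable section

def GoodQ {n : ℕ} (Q : Fin n → Fin n → ℝ) : Prop :=
  (∀ i j, Q i j ∈ Set.Icc (0:ℝ) 1) ∧ (∀ i, Monotone (Q i))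

section QextBasic
variable {n : ℕ} {Q : Fin n → Fin n → ℝ}

lemma qext_zero (i : Fin n) : Qext Q i 0 = 0 := by simp [Qext]

lemma qext_top (i : Fin n) {a : ℕ} (ha : n + 1 ≤ a) : Qext Q i a = 1 := by
  have : ¬ (1 ≤ a ∧ a ≤ n) := by omega
  simp [Qext, this]; omega

lemma qext_mem (hQ : GoodQ Q) (i : Fin n) (a : ℕ) : Qext Q i a ∈ Set.Icc (0:ℝ) 1 := by
  unfold Qext
  split
  · exact hQ.1 i _
  · split <;> simp

lemma qext_mono (hQ : GoodQ Q) (i : Fin n) : Monotone (Qext Q i) := by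
  apply monotone_nat_of_le_succ
  intro a
  rcases Nat.eq_zero_or_pos a with rfl | ha
  · rw [qext_zero]; exact (qext_mem hQ i 1).1
  rcases le_or_gt (a+1) n with h | h
  · have h1 : (1 ≤ a ∧ a ≤ n) := ⟨ha, by omega⟩
    have h2 : (1 ≤ a+1 ∧ a+1 ≤ n) := ⟨by omega, h⟩
    simp only [Qext, dif_pos h1, dif_pos h2]
    exact hQ.2 i (by simp only [Fin.mk_le_mk]; omega)
  · rcases le_or_gt a n with h' | h'
    · have : Qext Q i (a+1) = 1 := qext_top i (by omega)
      rw [this]; exact (qext_mem hQ i a).2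
    · rw [qext_top i (by omega), qext_top i (by omega)]

lemma qext_nonneg (hQ : GoodQ Q) (i : Fin n) (a : ℕ) : 0 ≤ Qext Q i a := (qext_mem hQ i a).1
lemma qext_le_one (hQ : GoodQ Q) (i : Fin n) (a : ℕ) : Qext Q i a ≤ 1 := (qext_mem hQ i a).2

/-- telescoping over an Ico -/
lemma tele_Ico (f : ℕ → ℝ) {lo hi : ℕ} (h : lo ≤ hi) :
    ∑ a ∈ Finset.Ico lo hi, (f (a+1) - f a) = f hi - f lo := by
  induction hi, h using Nat.le_induction with
  | base => simp
  | succ k hk ih => rw [Finset.sum_Ico_succ_top (by omega), ih]; ring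
end QextBasic

section RD
variable {n : ℕ} {Q₁ Q₂ : Fin n → Fin n → ℝ}

def rdSet (Q₁ Q₂ : Fin n → Fin n → ℝ) : Set ℝ :=
  {d : ℝ | ∃ (lo hi : Fin n) (a b : ℕ), 1 ≤ a ∧ a < b ∧ b ≤ n + 1 ∧
    d = (n : ℝ)⁻¹ * |∑ x ∈ Finset.Icc lo hi,
        ((Qext Q₁ x b - Qext Q₁ x a) - (Qext Q₂ x b - Qext Q₂ x a))|}

lemma rdSet_bddAbove (h₁ : GoodQ Q₁) (h₂ : GoodQ Q₂) : BddAbove (rdSet Q₁ Q₂) := by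
  refine ⟨2, ?_⟩
  rintro d ⟨lo, hi, a, b, ha, hab, hb, rfl⟩
  have hn : 0 < n := lo.pos
  have hcard : (Finset.Icc lo hi).card ≤ n := by
    calc (Finset.Icc lo hi).card ≤ Finset.univ.card := Finset.card_le_card (Finset.subset_univ _)
    _ = n := by simp
  have hterm : ∀ x ∈ Finset.Icc lo hi,
      |(Qext Q₁ x b - Qext Q₁ x a) - (Qext Q₂ x b - Qext Q₂ x a)| ≤ 2 := by
    intro x _
    have m1 := qext_mem h₁ x a; have m2 := qext_mem h₁ x b
    have m3 := qext_mem h₂ x a; have m4 := qext_mem h₂ x b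
    simp only [Set.mem_Icc] at m1 m2 m3 m4
    rw [abs_le]; constructor <;> nlinarith
  calc (n : ℝ)⁻¹ * |∑ x ∈ Finset.Icc lo hi, _| ≤ (n:ℝ)⁻¹ * ((Finset.Icc lo hi).card * 2) := by
        apply mul_le_mul_of_nonneg_left _ (by positivity)
        calc |∑ x ∈ Finset.Icc lo hi, ((Qext Q₁ x b - Qext Q₁ x a) - (Qext Q₂ x b - Qext Q₂ x a))|
            ≤ ∑ x ∈ Finset.Icc lo hi, |(Qext Q₁ x b - Qext Q₁ x a) - (Qext Q₂ x b - Qext Q₂ x a)| :=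
              Finset.abs_sum_le_sum_abs _ _
          _ ≤ ∑ _x ∈ Finset.Icc lo hi, 2 := Finset.sum_le_sum hterm
          _ = (Finset.Icc lo hi).card * 2 := by simp [mul_comm]
    _ ≤ (n:ℝ)⁻¹ * (n * 2) := by
        apply mul_le_mul_of_nonneg_left _ (by positivity)
        have : ((Finset.Icc lo hi).card : ℝ) ≤ n := by exact_mod_cast hcard
        nlinarith
    _ ≤ 2 := by rw [inv_mul_eq_div, div_le_iff₀ (by positivity)]; nlinarith [ (show (0:ℝ) < n by positivity)]

lemma rdSet_nonempty (hn : 0 < n) : (rdSet Q₁ Q₂).Nonempty := by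
  refine ⟨_, ⟨⟨0, hn⟩, ⟨0, hn⟩, 1, 2, le_refl _, by omega, by omega, rfl⟩⟩

lemma rectDistW_nonneg (hn : 0 < n) (h₁ : GoodQ Q₁) (h₂ : GoodQ Q₂) : 0 ≤ rectDistW Q₁ Q₂ := by
  obtain ⟨d, hd⟩ := rdSet_nonempty (Q₁ := Q₁) (Q₂ := Q₂) hn
  have hd0 : 0 ≤ d := by
    obtain ⟨lo, hi, a, b, _, _, _, rfl⟩ := hd
    positivity
  exact le_trans hd0 (le_csSup (rdSet_bddAbove h₁ h₂) hd)

lemma key_le (h₁ : GoodQ Q₁) (h₂ : GoodQ Q₂) (lo hi : Fin n) {a b : ℕ}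
    (ha : 1 ≤ a) (hab : a < b) (hb : b ≤ n + 1) :
    |∑ x ∈ Finset.Icc lo hi, ((Qext Q₁ x b - Qext Q₁ x a) - (Qext Q₂ x b - Qext Q₂ x a))|
      ≤ n * rectDistW Q₁ Q₂ := by
  have hn : 0 < n := lo.pos
  have : (n : ℝ)⁻¹ * |∑ x ∈ Finset.Icc lo hi,
      ((Qext Q₁ x b - Qext Q₁ x a) - (Qext Q₂ x b - Qext Q₂ x a))| ≤ rectDistW Q₁ Q₂ :=
    le_csSup (rdSet_bddAbove h₁ h₂) ⟨lo, hi, a, b, ha, hab, hb, rfl⟩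
  have hn' : (0:ℝ) < n := by positivity
  calc |∑ x ∈ Finset.Icc lo hi, ((Qext Q₁ x b - Qext Q₁ x a) - (Qext Q₂ x b - Qext Q₂ x a))|
      = n * ((n : ℝ)⁻¹ * |∑ x ∈ Finset.Icc lo hi,
        ((Qext Q₁ x b - Qext Q₁ x a) - (Qext Q₂ x b - Qext Q₂ x a))|) := by
        field_simp
    _ ≤ n * rectDistW Q₁ Q₂ := by nlinarith
end RD

/-- a convex nonempty finset in a linear locally finite order is an Icc -/
lemma convex_eq_Icc {α : Type*} [LinearOrder α] [LocallyFiniteOrder α] (I : Finset α)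
    (hne : I.Nonempty)
    (hconv : ∀ x y z : α, x ∈ I → z ∈ I → x ≤ y → y ≤ z → y ∈ I) :
    I = Finset.Icc (I.min' hne) (I.max' hne) := by
  ext a
  simp only [Finset.mem_Icc]
  constructor
  · intro ha; exact ⟨I.min'_le a ha, I.le_max' a ha⟩
  · rintro ⟨h1, h2⟩; exact hconv _ _ _ (I.min'_mem hne) (I.max'_mem hne) h1 h2

/-- sum over a Fin-Icc as sum over ℕ-Icc -/
lemma sum_fin_Icc_eq {k : ℕ} (lo hi : Fin k) (f : ℕ → ℝ) :
    ∑ a ∈ Finset.Icc lo hi, f (a : ℕ) = ∑ c ∈ Finset.Icc (lo : ℕ) (hi : ℕ), f c := by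
  rw [← Fin.map_valEmbedding_Icc, Finset.sum_map]
  rfl

section TwoCol
variable {n : ℕ} {Q₁ Q₂ : Fin n → Fin n → ℝ}

lemma two_col_bound (h₁ : GoodQ Q₁) (h₂ : GoodQ Q₂) (lo hi : Fin n) {a b : ℕ}
    (hab : a < b) (hb : b ≤ n + 1) :
    |∑ x ∈ Finset.Icc lo hi, ((Qext Q₁ x b - Qext Q₁ x a) - (Qext Q₂ x b - Qext Q₂ x a))|
      ≤ n * rectDistW Q₁ Q₂ := by
  have hn : 0 < n := lo.pos
  rcases Nat.eq_zero_or_pos a with rfl | ha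
  · rcases eq_or_lt_of_le hb with rfl | hb'
    · have : ∀ x ∈ Finset.Icc lo hi,
        ((Qext Q₁ x (n+1) - Qext Q₁ x 0) - (Qext Q₂ x (n+1) - Qext Q₂ x 0)) = 0 := by
        intro x _; rw [qext_zero, qext_zero, qext_top x le_rfl, qext_top x le_rfl]; ring
      rw [Finset.sum_congr rfl this]
      simp only [Finset.sum_const, smul_zero, abs_zero]
      have := rectDistW_nonneg (Q₁ := Q₁) (Q₂ := Q₂) hn h₁ h₂
      positivity
    · have heq : ∀ x ∈ Finset.Icc lo hi,
        ((Qext Q₁ x b - Qext Q₁ x 0) - (Qext Q₂ x b - Qext Q₂ x 0)) =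
        -(((Qext Q₁ x (n+1) - Qext Q₁ x b) - (Qext Q₂ x (n+1) - Qext Q₂ x b))) := by
        intro x _; rw [qext_zero, qext_zero, qext_top (Q := Q₁) x le_rfl,
          qext_top (Q := Q₂) x le_rfl]; ring
      rw [Finset.sum_congr rfl heq, Finset.sum_neg_distrib, abs_neg]
      exact key_le h₁ h₂ lo hi hab (by omega) (by omega)
  · exact key_le h₁ h₂ lo hi ha hab hb

lemma interval_bound (h₁ : GoodQ Q₁) (h₂ : GoodQ Q₂) (hn : 0 < n)
    (I : Finset (Fin n)) (J : Finset (Fin (n+1)))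
    (hI : ∀ x y z : Fin n, x ∈ I → z ∈ I → x ≤ y → y ≤ z → y ∈ I)
    (hJ : ∀ x y z : Fin (n+1), x ∈ J → z ∈ J → x ≤ y → y ≤ z → y ∈ J) :
    |∑ x ∈ I, ∑ a ∈ J, ((Qext Q₁ x ((a:ℕ)+1) - Qext Q₁ x (a:ℕ))
        - (Qext Q₂ x ((a:ℕ)+1) - Qext Q₂ x (a:ℕ)))| ≤ n * rectDistW Q₁ Q₂ := by
  have hd := rectDistW_nonneg (Q₁ := Q₁) (Q₂ := Q₂) hn h₁ h₂
  rcases I.eq_empty_or_nonempty with rfl | hIne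
  · simp only [Finset.sum_empty, abs_zero]; positivity
  rcases J.eq_empty_or_nonempty with rfl | hJne
  · simp only [Finset.sum_empty, Finset.sum_const, smul_zero, abs_zero]; positivity
  set a₀ : ℕ := (J.min' hJne : ℕ) with ha₀
  set b₀ : ℕ := (J.max' hJne : ℕ) + 1 with hb₀
  have hinner : ∀ x : Fin n, ∑ a ∈ J, ((Qext Q₁ x ((a:ℕ)+1) - Qext Q₁ x (a:ℕ))
        - (Qext Q₂ x ((a:ℕ)+1) - Qext Q₂ x (a:ℕ)))
      = ((Qext Q₁ x b₀ - Qext Q₁ x a₀) - (Qext Q₂ x b₀ - Qext Q₂ x a₀)) := by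
    intro x
    have hmm : (J.min' hJne : ℕ) ≤ (J.max' hJne : ℕ) := J.min'_le _ (J.max'_mem hJne)
    rw [convex_eq_Icc J hJne hJ,
      sum_fin_Icc_eq _ _ (fun c => ((Qext Q₁ x (c+1) - Qext Q₁ x c)
        - (Qext Q₂ x (c+1) - Qext Q₂ x c)))]
    have : ∀ c : ℕ, ((Qext Q₁ x (c+1) - Qext Q₁ x c) - (Qext Q₂ x (c+1) - Qext Q₂ x c))
        = ((fun u => Qext Q₁ x u - Qext Q₂ x u) (c+1) - (fun u => Qext Q₁ x u - Qext Q₂ x u) c) := by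
      intro c; ring
    rw [Finset.sum_congr rfl (fun c _ => this c)]
    rw [show Finset.Icc (J.min' hJne : ℕ) (J.max' hJne : ℕ)
        = Finset.Ico (J.min' hJne : ℕ) ((J.max' hJne : ℕ) + 1) by
      rw [Finset.Ico_add_one_right_eq_Icc]]
    exact (tele_Ico (fun u => Qext Q₁ x u - Qext Q₂ x u) (by omega)).trans (by ring)
  rw [Finset.sum_congr rfl (fun x _ => hinner x)]
  rw [convex_eq_Icc I hIne hI]
  have hmm : (J.min' hJne : ℕ) ≤ (J.max' hJne : ℕ) := J.min'_le _ (J.max'_mem hJne)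
  have hlt := (J.max' hJne).isLt
  exact two_col_bound h₁ h₂ _ _ (by omega) (by omega)
end TwoCol

lemma teleN (f g : ℕ → ℝ) (k : ℕ) :
    ∏ i ∈ Finset.range k, f i - ∏ i ∈ Finset.range k, g i =
      ∑ i₀ ∈ Finset.range k, ∏ i ∈ Finset.range k,
        (if i < i₀ then f i else if i = i₀ then f i - g i else g i) := by
  induction k with
  | zero => simp
  | succ k ih =>
    rw [Finset.prod_range_succ, Finset.prod_range_succ, Finset.sum_range_succ]
    have h1 : ∏ i ∈ Finset.range (k+1),
        (if i < k then f i else if i = k then f i - g i else g i)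
        = (∏ i ∈ Finset.range k, f i) * (f k - g k) := by
      rw [Finset.prod_range_succ]
      congr 1
      · exact Finset.prod_congr rfl fun i hi => by
          rw [if_pos (Finset.mem_range.mp hi)]
      · simp
    have h2 : ∀ i₀ ∈ Finset.range k, ∏ i ∈ Finset.range (k+1),
        (if i < i₀ then f i else if i = i₀ then f i - g i else g i)
        = (∏ i ∈ Finset.range k, (if i < i₀ then f i else if i = i₀ then f i - g i else g i))
            * g k := by
      intro i₀ hi₀
      rw [Finset.prod_range_succ]
      congr 1
      have : ¬ (k < i₀) := by have := Finset.mem_range.mp hi₀; omega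
      have : ¬ (k = i₀) := by have := Finset.mem_range.mp hi₀; omega
      simp_all
    rw [h1, Finset.sum_congr rfl h2, ← Finset.sum_mul, ← ih]
    ring

lemma teleFin {m : ℕ} (f g : Fin m → ℝ) :
    ∏ i, f i - ∏ i, g i =
      ∑ i₀ : Fin m, ∏ i : Fin m,
        (if i < i₀ then f i else if i = i₀ then f i - g i else g i) := by
  classical
  let F : ℕ → ℝ := fun i => if h : i < m then f ⟨i, h⟩ else 1
  let G : ℕ → ℝ := fun i => if h : i < m then g ⟨i, h⟩ else 1
  have hFval : ∀ i : Fin m, F (i : ℕ) = f i := fun i => by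
    simp only [F, dif_pos i.isLt, Fin.eta]
  have hGval : ∀ i : Fin m, G (i : ℕ) = g i := fun i => by
    simp only [G, dif_pos i.isLt, Fin.eta]
  have hf : ∏ i, f i = ∏ i ∈ Finset.range m, F i := by
    rw [← Fin.prod_univ_eq_prod_range]
    exact Finset.prod_congr rfl fun i _ => (hFval i).symm
  have hg : ∏ i, g i = ∏ i ∈ Finset.range m, G i := by
    rw [← Fin.prod_univ_eq_prod_range]
    exact Finset.prod_congr rfl fun i _ => (hGval i).symm
  have hrhs : ∑ i₀ ∈ Finset.range m, ∏ i ∈ Finset.range m,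
        (if i < i₀ then F i else if i = i₀ then F i - G i else G i)
      = ∑ i₀ : Fin m, ∏ i : Fin m,
        (if i < i₀ then f i else if i = i₀ then f i - g i else g i) := by
    rw [← Fin.sum_univ_eq_sum_range]
    refine Finset.sum_congr rfl fun i₀ _ => ?_
    rw [← Fin.prod_univ_eq_prod_range]
    refine Finset.prod_congr rfl fun i _ => ?_
    by_cases hlt : (i:ℕ) < (i₀:ℕ)
    · rw [if_pos hlt, if_pos (Fin.lt_def.mpr hlt), hFval]
    · rw [if_neg hlt, if_neg (fun h => hlt (Fin.lt_def.mp h))]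
      by_cases heq : (i:ℕ) = (i₀:ℕ)
      · rw [if_pos heq, if_pos (Fin.ext heq), hFval, hGval]
      · rw [if_neg heq, if_neg (fun h => heq (congrArg Fin.val h)), hGval]
  rw [hf, hg, teleN F G m, hrhs]

def Dv {n : ℕ} (Q : Fin n → Fin n → ℝ) (x : Fin n) (a : Fin (n+1)) : ℝ :=
  Qext Q x ((a:ℕ)+1) - Qext Q x (a:ℕ)

lemma Dv_nonneg {n : ℕ} {Q : Fin n → Fin n → ℝ} (hQ : GoodQ Q) (x : Fin n) (a : Fin (n+1)) :
    0 ≤ Dv Q x a := sub_nonneg.mpr (qext_mono hQ x (Nat.le_succ _))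

lemma sum_Dv {n : ℕ} {Q : Fin n → Fin n → ℝ} (x : Fin n) :
    ∑ a : Fin (n+1), Dv Q x a = 1 := by
  have : ∑ a : Fin (n+1), Dv Q x a
      = ∑ c ∈ Finset.range (n+1), (Qext Q x (c+1) - Qext Q x c) :=
    Fin.sum_univ_eq_sum_range (fun c => Qext Q x (c+1) - Qext Q x c) (n+1)
  rw [this, Finset.range_eq_Ico, tele_Ico _ (Nat.zero_le _), qext_zero, qext_top x le_rfl]
  ring

def wgt {m n : ℕ} (τ : Equiv.Perm (Fin m)) (Q₁ Q₂ : Fin n → Fin n → ℝ) (i₀ : Fin m)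
    (Y : Fin m → Fin n) (B : Fin m → Fin (n+1)) (i : Fin m) : ℝ :=
  if i = i₀ then 1 else if i < i₀ then Dv Q₁ (Y i) (B (τ i)) else Dv Q₂ (Y i) (B (τ i))

lemma wgt_nonneg {m n : ℕ} (τ : Equiv.Perm (Fin m)) {Q₁ Q₂ : Fin n → Fin n → ℝ}
    (h₁ : GoodQ Q₁) (h₂ : GoodQ Q₂) (i₀ : Fin m) (Y : Fin m → Fin n)
    (B : Fin m → Fin (n+1)) (i : Fin m) : 0 ≤ wgt τ Q₁ Q₂ i₀ Y B i := by
  unfold wgt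
  split_ifs
  · norm_num
  · exact Dv_nonneg h₁ _ _
  · exact Dv_nonneg h₂ _ _

lemma sumW_le {m n : ℕ} (τ : Equiv.Perm (Fin m)) {Q₁ Q₂ : Fin n → Fin n → ℝ}
    (h₁ : GoodQ Q₁) (h₂ : GoodQ Q₂) (i₀ : Fin m) (Y : Fin m → Fin n) :
    ∑ B ∈ Finset.univ.filter (fun B : Fin m → Fin (n+1) =>
        B (τ i₀) = 0 ∧ ∀ i j : Fin m, i ≠ τ i₀ → j ≠ τ i₀ → i < j → B i < B j),
      ∏ i : Fin m, wgt τ Q₁ Q₂ i₀ Y B i ≤ 1 := by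
  set g : Fin m → Fin (n+1) → ℝ := fun i c =>
    if i = i₀ then (if c = 0 then 1 else 0)
    else if i < i₀ then Dv Q₁ (Y i) c else Dv Q₂ (Y i) c with hg
  have hg_nonneg : ∀ i c, 0 ≤ g i c := by
    intro i c
    rw [hg]
    dsimp only
    split_ifs
    · norm_num
    · norm_num
    · exact Dv_nonneg h₁ _ _
    · exact Dv_nonneg h₂ _ _
  have step1 : ∑ B ∈ Finset.univ.filter (fun B : Fin m → Fin (n+1) =>
        B (τ i₀) = 0 ∧ ∀ i j : Fin m, i ≠ τ i₀ → j ≠ τ i₀ → i < j → B i < B j),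
      ∏ i : Fin m, wgt τ Q₁ Q₂ i₀ Y B i
      ≤ ∑ B : Fin m → Fin (n+1), ∏ i : Fin m, g i (B (τ i)) := by
    have hgw : ∀ B ∈ Finset.univ.filter (fun B : Fin m → Fin (n+1) =>
        B (τ i₀) = 0 ∧ ∀ i j : Fin m, i ≠ τ i₀ → j ≠ τ i₀ → i < j → B i < B j),
        ∏ i : Fin m, wgt τ Q₁ Q₂ i₀ Y B i = ∏ i : Fin m, g i (B (τ i)) := by
      intro B hB
      have hB0 : B (τ i₀) = 0 := (Finset.mem_filter.mp hB).2.1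
      refine Finset.prod_congr rfl fun i _ => ?_
      rw [hg]
      unfold wgt
      dsimp only
      by_cases hii : i = i₀
      · subst hii
        rw [if_pos rfl, if_pos rfl, if_pos hB0]
      · rw [if_neg hii, if_neg hii]
    rw [Finset.sum_congr rfl hgw]
    apply Finset.sum_le_sum_of_subset_of_nonneg (Finset.filter_subset _ _)
    intro B _ _
    exact Finset.prod_nonneg fun i _ => hg_nonneg i _
  have step2 : ∑ B : Fin m → Fin (n+1), ∏ i : Fin m, g i (B (τ i))
      = ∑ C : Fin m → Fin (n+1), ∏ i : Fin m, g i (C i) := by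
    refine Fintype.sum_bijective (fun B : Fin m → Fin (n+1) => B ∘ τ) ?_ _ _ (fun B => rfl)
    constructor
    · intro B B' h
      funext j
      have := congrFun h (τ.symm j)
      simpa using this
    · intro C
      exact ⟨C ∘ τ.symm, by funext i; simp⟩
  have step3 : ∑ C : Fin m → Fin (n+1), ∏ i : Fin m, g i (C i)
      = ∏ i : Fin m, ∑ c : Fin (n+1), g i c := by
    rw [Finset.prod_univ_sum]
    rw [Fintype.piFinset_univ]
  have step4 : ∏ i : Fin m, ∑ c : Fin (n+1), g i c = 1 := by
    apply Finset.prod_eq_one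
    intro i _
    rw [hg]
    dsimp only
    by_cases hii : i = i₀
    · simp only [if_pos hii]
      rw [Finset.sum_ite_eq' Finset.univ (0 : Fin (n+1)) (fun _ => (1:ℝ))]
      simp
    · simp only [if_neg hii]
      by_cases hlt : i < i₀
      · simp only [if_pos hlt]; exact sum_Dv _
      · simp only [if_neg hlt]; exact sum_Dv _
  calc _ ≤ ∑ B : Fin m → Fin (n+1), ∏ i : Fin m, g i (B (τ i)) := step1
    _ = 1 := by rw [step2, step3, step4]

lemma shape_card_le {m n : ℕ} (i₀ : Fin m) (z : Fin n) :
    (Finset.univ.filter (fun Y : Fin m → Fin n => Y i₀ = z ∧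
      ∀ i j : Fin m, i ≠ i₀ → j ≠ i₀ → i < j → Y i < Y j)).card ≤ n.choose (m-1) := by
  classical
  set s : Finset (Fin m) := Finset.univ.erase i₀ with hs
  have hscard : s.card = m - 1 := by
    rw [hs, Finset.card_erase_of_mem (Finset.mem_univ _), Finset.card_univ, Fintype.card_fin]
  set Shape := Finset.univ.filter (fun Y : Fin m → Fin n => Y i₀ = z ∧
      ∀ i j : Fin m, i ≠ i₀ → j ≠ i₀ → i < j → Y i < Y j) with hShape
  have hinjOn : ∀ Y ∈ Shape, Set.InjOn Y s := by
    intro Y hY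
    obtain ⟨-, hY2⟩ := Finset.mem_filter.mp hY
    intro i hi j hj hij
    by_contra hne
    have hi' : i ≠ i₀ := (Finset.mem_erase.mp hi).1
    have hj' : j ≠ i₀ := (Finset.mem_erase.mp hj).1
    rcases lt_trichotomy i j with h | h | h
    · exact absurd hij (ne_of_lt (hY2.2 i j hi' hj' h))
    · exact hne h
    · exact absurd hij.symm (ne_of_lt (hY2.2 j i hj' hi' h))
  have hmapsto : ∀ Y ∈ Shape, s.image Y ∈ Finset.powersetCard (m-1) Finset.univ := by
    intro Y hY
    rw [Finset.mem_powersetCard]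
    refine ⟨Finset.subset_univ _, ?_⟩
    rw [Finset.card_image_of_injOn (by exact_mod_cast hinjOn Y hY), hscard]
  have hcardim : ∀ Y ∈ Shape, (s.image Y).card = s.card := by
    intro Y hY
    rw [Finset.card_image_of_injOn (by exact_mod_cast hinjOn Y hY)]
  have hinj : ∀ Y ∈ Shape, ∀ Y' ∈ Shape, s.image Y = s.image Y' → Y = Y' := by
    intro Y hY Y' hY' himg
    obtain ⟨hY0, hY2⟩ := (Finset.mem_filter.mp hY).2
    obtain ⟨hY0', hY2'⟩ := (Finset.mem_filter.mp hY').2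
    set e := s.orderEmbOfFin (rfl : s.card = s.card) with he
    have hemem : ∀ p, e p ∈ s := fun p => Finset.orderEmbOfFin_mem s rfl p
    have heY : StrictMono (Y ∘ e) := by
      intro p q hpq
      exact hY2 _ _ (Finset.mem_erase.mp (hemem p)).1 (Finset.mem_erase.mp (hemem q)).1
        (e.strictMono hpq)
    have heY' : StrictMono (Y' ∘ e) := by
      intro p q hpq
      exact hY2' _ _ (Finset.mem_erase.mp (hemem p)).1 (Finset.mem_erase.mp (hemem q)).1
        (e.strictMono hpq)
    have h1 : Y ∘ e = (s.image Y).orderEmbOfFin (hcardim Y hY) :=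
      Finset.orderEmbOfFin_unique _ (fun p => Finset.mem_image_of_mem Y (hemem p)) heY
    have h2 : Y' ∘ e = (s.image Y).orderEmbOfFin (hcardim Y hY) := by
      refine Finset.orderEmbOfFin_unique _ ?_ heY'
      intro p
      rw [himg]
      exact Finset.mem_image_of_mem Y' (hemem p)
    have heq : Y ∘ e = Y' ∘ e := h1.trans h2.symm
    funext i
    by_cases hii : i = i₀
    · rw [hii, hY0, hY0']
    · have : i ∈ s := Finset.mem_erase.mpr ⟨hii, Finset.mem_univ _⟩
      have : i ∈ Set.range e := by rw [Finset.range_orderEmbOfFin]; exact this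
      obtain ⟨p, hp⟩ := this
      have := congrFun heq p
      simpa [hp] using this
  calc Shape.card ≤ (Finset.powersetCard (m-1) (Finset.univ : Finset (Fin n))).card :=
        Finset.card_le_card_of_injOn (fun Y => s.image Y) hmapsto (fun Y hY Y' hY' h =>
          hinj Y (by simpa using hY) Y' (by simpa using hY') h)
    _ = n.choose (m-1) := by rw [Finset.card_powersetCard, Finset.card_univ, Fintype.card_fin]

def caseF {m n : ℕ} (τ : Equiv.Perm (Fin m)) (Q₁ Q₂ : Fin n → Fin n → ℝ) (i₀ : Fin m)
    (X : Fin m → Fin n) (A : Fin m → Fin (n+1)) (i : Fin m) : ℝ :=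
  if i < i₀ then Dv Q₁ (X i) (A (τ i))
  else if i = i₀ then Dv Q₁ (X i) (A (τ i)) - Dv Q₂ (X i) (A (τ i))
  else Dv Q₂ (X i) (A (τ i))

lemma Tbound {m n : ℕ} (τ : Equiv.Perm (Fin m)) (hn : 0 < n) {Q₁ Q₂ : Fin n → Fin n → ℝ}
    (h₁ : GoodQ Q₁) (h₂ : GoodQ Q₂) (i₀ : Fin m) :
    |∑ X ∈ Finset.univ.filter (fun X : Fin m → Fin n => StrictMono X),
      ∑ A ∈ Finset.univ.filter (fun A : Fin m → Fin (n+1) => StrictMono A),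
        ∏ i : Fin m, caseF τ Q₁ Q₂ i₀ X A i|
      ≤ (n.choose (m-1) : ℝ) * ((n:ℝ) * rectDistW Q₁ Q₂) := by
  classical
  set d := rectDistW Q₁ Q₂ with hd_def
  have hd : 0 ≤ d := rectDistW_nonneg hn h₁ h₂
  set z : Fin n := ⟨0, hn⟩ with hz
  set SMX := Finset.univ.filter (fun X : Fin m → Fin n => StrictMono X) with hSMX
  set SMA := Finset.univ.filter (fun A : Fin m → Fin (n+1) => StrictMono A) with hSMA
  set ShapeX := Finset.univ.filter (fun Y : Fin m → Fin n => Y i₀ = z ∧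
      ∀ i j : Fin m, i ≠ i₀ → j ≠ i₀ → i < j → Y i < Y j) with hShapeX
  set ShapeA := Finset.univ.filter (fun B : Fin m → Fin (n+1) => B (τ i₀) = 0 ∧
      ∀ i j : Fin m, i ≠ τ i₀ → j ≠ τ i₀ → i < j → B i < B j) with hShapeA
  set rX : (Fin m → Fin n) → (Fin m → Fin n) := fun X i => if i = i₀ then z else X i with hrX
  set rA : (Fin m → Fin (n+1)) → (Fin m → Fin (n+1)) :=
    fun A j => if j = τ i₀ then 0 else A j with hrA
  have hmapsX : ∀ X ∈ SMX, rX X ∈ ShapeX := by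
    intro X hX
    have hXmono : StrictMono X := (Finset.mem_filter.mp hX).2
    rw [hShapeX, Finset.mem_filter]
    refine ⟨Finset.mem_univ _, by rw [hrX]; simp, ?_⟩
    intro i j hi hj hij
    show (if i = i₀ then z else X i) < (if j = i₀ then z else X j)
    rw [if_neg hi, if_neg hj]
    exact hXmono hij
  have hmapsA : ∀ A ∈ SMA, rA A ∈ ShapeA := by
    intro A hA
    have hAmono : StrictMono A := (Finset.mem_filter.mp hA).2
    rw [hShapeA, Finset.mem_filter]
    refine ⟨Finset.mem_univ _, by rw [hrA]; simp, ?_⟩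
    intro i j hi hj hij
    show (if i = τ i₀ then 0 else A i) < (if j = τ i₀ then 0 else A j)
    rw [if_neg hi, if_neg hj]
    exact hAmono hij
  -- rewrite as fibered sums
  have hfib :
      ∑ X ∈ SMX, ∑ A ∈ SMA, ∏ i : Fin m, caseF τ Q₁ Q₂ i₀ X A i
      = ∑ Y ∈ ShapeX, ∑ B ∈ ShapeA,
          ∑ X ∈ SMX.filter (fun X => rX X = Y), ∑ A ∈ SMA.filter (fun A => rA A = B),
            ∏ i : Fin m, caseF τ Q₁ Q₂ i₀ X A i := by
    rw [← Finset.sum_fiberwise_of_maps_to hmapsX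
      (fun X => ∑ A ∈ SMA, ∏ i : Fin m, caseF τ Q₁ Q₂ i₀ X A i)]
    refine Finset.sum_congr rfl fun Y _ => ?_
    have hstep : ∀ X : Fin m → Fin n, ∑ A ∈ SMA, ∏ i : Fin m, caseF τ Q₁ Q₂ i₀ X A i
        = ∑ B ∈ ShapeA, ∑ A ∈ SMA.filter (fun A => rA A = B),
            ∏ i : Fin m, caseF τ Q₁ Q₂ i₀ X A i := fun X =>
      (Finset.sum_fiberwise_of_maps_to hmapsA (fun A => ∏ i : Fin m, caseF τ Q₁ Q₂ i₀ X A i)).symm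
    rw [Finset.sum_congr rfl (fun X _ => hstep X)]
    exact Finset.sum_comm
  rw [hfib]
  -- bound each (Y, B) block
  have hkey : ∀ Y ∈ ShapeX, ∀ B ∈ ShapeA,
      |∑ X ∈ SMX.filter (fun X => rX X = Y), ∑ A ∈ SMA.filter (fun A => rA A = B),
          ∏ i : Fin m, caseF τ Q₁ Q₂ i₀ X A i|
        ≤ (∏ i : Fin m, wgt τ Q₁ Q₂ i₀ Y B i) * ((n:ℝ) * d) := by
    intro Y hY B hB
    obtain ⟨-, hY0, hYmono⟩ := Finset.mem_filter.mp hY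
    obtain ⟨-, hB0, hBmono⟩ := Finset.mem_filter.mp hB
    have hXY : ∀ X ∈ SMX.filter (fun X => rX X = Y), ∀ i, i ≠ i₀ → X i = Y i := by
      intro X hX i hi
      have := congrFun (Finset.mem_filter.mp hX).2 i
      simpa only [rX, if_neg hi] using this
    have hAB : ∀ A ∈ SMA.filter (fun A => rA A = B), ∀ i, i ≠ i₀ → A (τ i) = B (τ i) := by
      intro A hA i hi
      have hne : τ i ≠ τ i₀ := fun h => hi (τ.injective h)
      have := congrFun (Finset.mem_filter.mp hA).2 (τ i)
      simpa only [rA, if_neg hne] using this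
    have hprod : ∀ X ∈ SMX.filter (fun X => rX X = Y), ∀ A ∈ SMA.filter (fun A => rA A = B),
        ∏ i : Fin m, caseF τ Q₁ Q₂ i₀ X A i
          = (Dv Q₁ (X i₀) (A (τ i₀)) - Dv Q₂ (X i₀) (A (τ i₀)))
              * ∏ i : Fin m, wgt τ Q₁ Q₂ i₀ Y B i := by
      intro X hX A hA
      rw [Fintype.prod_eq_mul_prod_compl i₀ (caseF τ Q₁ Q₂ i₀ X A),
        Fintype.prod_eq_mul_prod_compl i₀ (wgt τ Q₁ Q₂ i₀ Y B)]
      have hc : caseF τ Q₁ Q₂ i₀ X A i₀ = Dv Q₁ (X i₀) (A (τ i₀)) - Dv Q₂ (X i₀) (A (τ i₀)) := by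
        unfold caseF
        rw [if_neg (lt_irrefl i₀), if_pos rfl]
      have hw : wgt τ Q₁ Q₂ i₀ Y B i₀ = 1 := by
        unfold wgt; rw [if_pos rfl]
      rw [hc, hw, one_mul]
      congr 1
      refine Finset.prod_congr rfl fun i hi => ?_
      have hi' : i ≠ i₀ := by simpa using hi
      simp only [caseF, wgt, if_neg hi', hXY X hX i hi', hAB A hA i hi']
    have hW : 0 ≤ ∏ i : Fin m, wgt τ Q₁ Q₂ i₀ Y B i :=
      Finset.prod_nonneg fun i _ => wgt_nonneg τ h₁ h₂ i₀ Y B i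
    -- factor out the weight
    have hfact : ∑ X ∈ SMX.filter (fun X => rX X = Y), ∑ A ∈ SMA.filter (fun A => rA A = B),
        ∏ i : Fin m, caseF τ Q₁ Q₂ i₀ X A i
        = (∑ X ∈ SMX.filter (fun X => rX X = Y), ∑ A ∈ SMA.filter (fun A => rA A = B),
            (Dv Q₁ (X i₀) (A (τ i₀)) - Dv Q₂ (X i₀) (A (τ i₀))))
          * ∏ i : Fin m, wgt τ Q₁ Q₂ i₀ Y B i := by
      rw [Finset.sum_mul]
      refine Finset.sum_congr rfl fun X hX => ?_
      rw [Finset.sum_mul]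
      exact Finset.sum_congr rfl fun A hA => hprod X hX A hA
    rw [hfact, abs_mul, abs_of_nonneg hW, mul_comm]
    apply mul_le_mul_of_nonneg_left _ hW
    -- now the double sum over the fibers; reindex by images
    set IX := (SMX.filter (fun X => rX X = Y)).image (fun X => X i₀) with hIX
    set JA := (SMA.filter (fun A => rA A = B)).image (fun A => A (τ i₀)) with hJA
    have hinjX : ∀ X ∈ SMX.filter (fun X => rX X = Y), ∀ X' ∈ SMX.filter (fun X => rX X = Y),
        X i₀ = X' i₀ → X = X' := by
      intro X hX X' hX' h
      funext i
      by_cases hi : i = i₀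
      · rw [hi]; exact h
      · rw [hXY X hX i hi, hXY X' hX' i hi]
    have hinjA : ∀ A ∈ SMA.filter (fun A => rA A = B), ∀ A' ∈ SMA.filter (fun A => rA A = B),
        A (τ i₀) = A' (τ i₀) → A = A' := by
      intro A hA A' hA' h
      funext j
      by_cases hj : j = τ i₀
      · rw [hj]; exact h
      · obtain ⟨i, rfl⟩ : ∃ i, τ i = j := ⟨τ.symm j, τ.apply_symm_apply j⟩
        have hi : i ≠ i₀ := fun hii => hj (by rw [hii])
        rw [hAB A hA i hi, hAB A' hA' i hi]
    have himg : ∑ X ∈ SMX.filter (fun X => rX X = Y), ∑ A ∈ SMA.filter (fun A => rA A = B),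
        (Dv Q₁ (X i₀) (A (τ i₀)) - Dv Q₂ (X i₀) (A (τ i₀)))
        = ∑ x ∈ IX, ∑ a ∈ JA, (Dv Q₁ x a - Dv Q₂ x a) := by
      rw [hIX, Finset.sum_image hinjX]
      refine Finset.sum_congr rfl fun X hX => ?_
      rw [hJA, Finset.sum_image hinjA]
    rw [himg]
    -- convexity of IX
    have hconvX : ∀ x y z' : Fin n, x ∈ IX → z' ∈ IX → x ≤ y → y ≤ z' → y ∈ IX := by
      intro x y z' hx hz hxy hyz
      rw [hIX, Finset.mem_image] at hx hz ⊢
      obtain ⟨X, hX, rfl⟩ := hx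
      obtain ⟨X', hX', rfl⟩ := hz
      refine ⟨fun i => if i = i₀ then y else X i, ?_, by dsimp only; rw [if_pos rfl]⟩
      have hXf := Finset.mem_filter.mp hX
      have hX'f := Finset.mem_filter.mp hX'
      have hXmono : StrictMono X := (Finset.mem_filter.mp hXf.1).2
      have hX'mono : StrictMono X' := (Finset.mem_filter.mp hX'f.1).2
      rw [Finset.mem_filter]
      constructor
      · rw [hSMX, Finset.mem_filter]
        refine ⟨Finset.mem_univ _, ?_⟩
        intro i j hij
        dsimp only
        by_cases hi : i = i₀ <;> by_cases hj : j = i₀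
        · exact absurd hij (by rw [hi, hj]; exact lt_irrefl i₀)
        · rw [if_pos hi, if_neg hj]
          calc y ≤ X' i₀ := hyz
            _ < X' j := hX'mono (hi ▸ hij)
            _ = X j := by rw [hXY X' hX' j hj, ← hXY X hX j hj]
        · rw [if_pos hj, if_neg hi]
          calc X i < X i₀ := hXmono (hj ▸ hij)
            _ ≤ y := hxy
        · rw [if_neg hi, if_neg hj]
          exact hXmono hij
      · funext i
        show (if i = i₀ then z else (if i = i₀ then y else X i)) = Y i
        by_cases hi : i = i₀
        · rw [if_pos hi, hi, hY0]
        · rw [if_neg hi, if_neg hi, hXY X hX i hi]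
      
    -- convexity of JA
    have hconvA : ∀ x y z' : Fin (n+1), x ∈ JA → z' ∈ JA → x ≤ y → y ≤ z' → y ∈ JA := by
      intro x y z' hx hz hxy hyz
      rw [hJA, Finset.mem_image] at hx hz ⊢
      obtain ⟨A, hA, rfl⟩ := hx
      obtain ⟨A', hA', rfl⟩ := hz
      refine ⟨fun j => if j = τ i₀ then y else A j, ?_, by dsimp only; rw [if_pos rfl]⟩
      have hAf := Finset.mem_filter.mp hA
      have hA'f := Finset.mem_filter.mp hA'
      have hAmono : StrictMono A := (Finset.mem_filter.mp hAf.1).2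
      have hA'mono : StrictMono A' := (Finset.mem_filter.mp hA'f.1).2
      have hABj : ∀ j, j ≠ τ i₀ → A j = B j := by
        intro j hj
        have := congrFun hAf.2 j
        simpa only [rA, if_neg hj] using this
      have hA'Bj : ∀ j, j ≠ τ i₀ → A' j = B j := by
        intro j hj
        have := congrFun hA'f.2 j
        simpa only [rA, if_neg hj] using this
      rw [Finset.mem_filter]
      constructor
      · rw [hSMA, Finset.mem_filter]
        refine ⟨Finset.mem_univ _, ?_⟩
        intro i j hij
        dsimp only
        by_cases hi : i = τ i₀ <;> by_cases hj : j = τ i₀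
        · exact absurd hij (by rw [hi, hj]; exact lt_irrefl (τ i₀))
        · rw [if_pos hi, if_neg hj]
          calc y ≤ A' (τ i₀) := hyz
            _ < A' j := hA'mono (hi ▸ hij)
            _ = A j := by rw [hA'Bj j hj, ← hABj j hj]
        · rw [if_pos hj, if_neg hi]
          calc A i < A (τ i₀) := hAmono (hj ▸ hij)
            _ ≤ y := hxy
        · rw [if_neg hi, if_neg hj]
          exact hAmono hij
      · funext j
        show (if j = τ i₀ then 0 else (if j = τ i₀ then y else A j)) = B j
        by_cases hj : j = τ i₀
        · rw [if_pos hj, hj, hB0]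
        · rw [if_neg hj, if_neg hj, hABj j hj]
    exact interval_bound h₁ h₂ hn IX JA hconvX hconvA
  -- assemble
  calc |∑ Y ∈ ShapeX, ∑ B ∈ ShapeA,
      ∑ X ∈ SMX.filter (fun X => rX X = Y), ∑ A ∈ SMA.filter (fun A => rA A = B),
        ∏ i : Fin m, caseF τ Q₁ Q₂ i₀ X A i|
      ≤ ∑ Y ∈ ShapeX, |∑ B ∈ ShapeA,
        ∑ X ∈ SMX.filter (fun X => rX X = Y), ∑ A ∈ SMA.filter (fun A => rA A = B),
          ∏ i : Fin m, caseF τ Q₁ Q₂ i₀ X A i| := Finset.abs_sum_le_sum_abs _ _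
    _ ≤ ∑ Y ∈ ShapeX, ∑ B ∈ ShapeA, |∑ X ∈ SMX.filter (fun X => rX X = Y),
          ∑ A ∈ SMA.filter (fun A => rA A = B),
            ∏ i : Fin m, caseF τ Q₁ Q₂ i₀ X A i| :=
        Finset.sum_le_sum fun Y _ => Finset.abs_sum_le_sum_abs _ _
    _ ≤ ∑ Y ∈ ShapeX, ∑ B ∈ ShapeA,
          (∏ i : Fin m, wgt τ Q₁ Q₂ i₀ Y B i) * ((n:ℝ) * d) :=
        Finset.sum_le_sum fun Y hY => Finset.sum_le_sum fun B hB => hkey Y hY B hB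
    _ = ∑ Y ∈ ShapeX, (∑ B ∈ ShapeA, ∏ i : Fin m, wgt τ Q₁ Q₂ i₀ Y B i) * ((n:ℝ) * d) := by
        refine Finset.sum_congr rfl fun Y _ => ?_
        rw [Finset.sum_mul]
    _ ≤ ∑ Y ∈ ShapeX, 1 * ((n:ℝ) * d) := by
        refine Finset.sum_le_sum fun Y _ => ?_
        apply mul_le_mul_of_nonneg_right (sumW_le τ h₁ h₂ i₀ Y) (by positivity)
    _ = (ShapeX.card : ℝ) * ((n:ℝ) * d) := by
        rw [Finset.sum_const, nsmul_eq_mul, one_mul]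
    _ ≤ (n.choose (m-1) : ℝ) * ((n:ℝ) * d) := by
        apply mul_le_mul_of_nonneg_right _ (by positivity)
        exact_mod_cast shape_card_le i₀ z

lemma choose_ineq {m n : ℕ} (hm : 0 < m) (hmn : 2 * m ≤ n) :
    m * (n.choose (m-1) * n) ≤ 2 * m^2 * n.choose m := by
  have key : n.choose m * m = n.choose (m-1) * (n - (m-1)) := by
    have h := Nat.choose_succ_right_eq n (m-1)
    rwa [Nat.sub_add_cancel hm] at h
  have h2 : n ≤ 2 * (n - (m-1)) := by omega
  calc m * (n.choose (m-1) * n) ≤ m * (n.choose (m-1) * (2 * (n - (m-1)))) :=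
        Nat.mul_le_mul_left _ (Nat.mul_le_mul_left _ h2)
    _ = 2 * m * (n.choose (m-1) * (n - (m-1))) := by ring
    _ = 2 * m * (n.choose m * m) := by rw [key]
    _ = 2 * m^2 * n.choose m := by ring

lemma main_bound {m n : ℕ} (τ : Equiv.Perm (Fin m)) (hn : 0 < n) (hmn : 2 * m ≤ n)
    {Q₁ Q₂ : Fin n → Fin n → ℝ} (h₁ : GoodQ Q₁) (h₂ : GoodQ Q₂) :
    |densW τ Q₁ - densW τ Q₂| ≤ 2 * (m : ℝ) ^ 2 * rectDistW Q₁ Q₂ := by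
  classical
  set d := rectDistW Q₁ Q₂ with hdd
  have hd : 0 ≤ d := rectDistW_nonneg hn h₁ h₂
  have hmle : m ≤ n := by omega
  have hC : (0:ℝ) < (n.choose m : ℝ) := by exact_mod_cast Nat.choose_pos hmle
  set SMX := Finset.univ.filter (fun X : Fin m → Fin n => StrictMono X) with hSMX
  set SMA := Finset.univ.filter (fun A : Fin m → Fin (n+1) => StrictMono A) with hSMA
  have hdiff : densW τ Q₁ - densW τ Q₂
      = (n.choose m : ℝ)⁻¹ * ∑ i₀ : Fin m, ∑ X ∈ SMX, ∑ A ∈ SMA,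
          ∏ i : Fin m, caseF τ Q₁ Q₂ i₀ X A i := by
    unfold densW
    rw [← mul_sub, ← Finset.sum_sub_distrib]
    congr 1
    have h1 : ∀ X : Fin m → Fin n,
        (∑ A ∈ SMA, ∏ i : Fin m, (Qext Q₁ (X i) ((A (τ i) : ℕ) + 1) - Qext Q₁ (X i) (A (τ i) : ℕ)))
          - (∑ A ∈ SMA, ∏ i : Fin m, (Qext Q₂ (X i) ((A (τ i) : ℕ) + 1) - Qext Q₂ (X i) (A (τ i) : ℕ)))
        = ∑ A ∈ SMA, ∑ i₀ : Fin m, ∏ i : Fin m, caseF τ Q₁ Q₂ i₀ X A i := by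
      intro X
      rw [← Finset.sum_sub_distrib]
      exact Finset.sum_congr rfl fun A _ => teleFin _ _
    calc ∑ X ∈ SMX, _ = ∑ X ∈ SMX, ∑ A ∈ SMA, ∑ i₀ : Fin m,
          ∏ i : Fin m, caseF τ Q₁ Q₂ i₀ X A i := Finset.sum_congr rfl fun X _ => h1 X
      _ = ∑ X ∈ SMX, ∑ i₀ : Fin m, ∑ A ∈ SMA,
          ∏ i : Fin m, caseF τ Q₁ Q₂ i₀ X A i := Finset.sum_congr rfl fun X _ => Finset.sum_comm
      _ = ∑ i₀ : Fin m, ∑ X ∈ SMX, ∑ A ∈ SMA,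
          ∏ i : Fin m, caseF τ Q₁ Q₂ i₀ X A i := Finset.sum_comm
  rw [hdiff, abs_mul, abs_of_nonneg (inv_nonneg.mpr hC.le)]
  calc (n.choose m : ℝ)⁻¹ * |∑ i₀ : Fin m, ∑ X ∈ SMX, ∑ A ∈ SMA,
        ∏ i : Fin m, caseF τ Q₁ Q₂ i₀ X A i|
      ≤ (n.choose m : ℝ)⁻¹ * ∑ i₀ : Fin m, |∑ X ∈ SMX, ∑ A ∈ SMA,
        ∏ i : Fin m, caseF τ Q₁ Q₂ i₀ X A i| :=
        mul_le_mul_of_nonneg_left (Finset.abs_sum_le_sum_abs _ _) (inv_nonneg.mpr hC.le)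
    _ ≤ (n.choose m : ℝ)⁻¹ * ∑ _i₀ : Fin m, (n.choose (m-1) : ℝ) * ((n:ℝ) * d) :=
        mul_le_mul_of_nonneg_left
          (Finset.sum_le_sum fun i₀ _ => Tbound τ hn h₁ h₂ i₀) (inv_nonneg.mpr hC.le)
    _ = (n.choose m : ℝ)⁻¹ * ((m:ℝ) * ((n.choose (m-1) : ℝ) * ((n:ℝ) * d))) := by
        rw [Finset.sum_const, Finset.card_univ, Fintype.card_fin, nsmul_eq_mul]
    _ ≤ 2 * (m:ℝ)^2 * d := by
        rcases Nat.eq_zero_or_pos m with rfl | hm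
        · simp
        have hcast : (m:ℝ) * ((n.choose (m-1):ℝ) * n) ≤ 2*(m:ℝ)^2*(n.choose m:ℝ) := by
          exact_mod_cast choose_ineq hm hmn
        calc (n.choose m : ℝ)⁻¹ * ((m:ℝ) * ((n.choose (m-1) : ℝ) * ((n:ℝ) * d)))
            = ((m:ℝ) * ((n.choose (m-1):ℝ) * n)) * d * (n.choose m : ℝ)⁻¹ := by ring
          _ ≤ (2*(m:ℝ)^2*(n.choose m:ℝ)) * d * (n.choose m : ℝ)⁻¹ :=
              mul_le_mul_of_nonneg_right
                (mul_le_mul_of_nonneg_right hcast hd) (inv_nonneg.mpr hC.le)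
          _ = 2*(m:ℝ)^2*d * ((n.choose m:ℝ) * (n.choose m : ℝ)⁻¹) := by ring
          _ = 2*(m:ℝ)^2*d := by rw [mul_inv_cancel₀ (ne_of_gt hC), mul_one]

section PermP
variable {m n : ℕ} (τ : Equiv.Perm (Fin m)) (σ : Equiv.Perm (Fin n))

lemma goodQ_QofPerm : GoodQ (QofPerm σ) := by
  refine ⟨fun i j => ?_, fun i j j' hj => ?_⟩
  · unfold QofPerm; split <;> simp
  · unfold QofPerm
    split_ifs with h1 h2 <;> norm_num
    exact absurd (lt_of_lt_of_le h1 hj) h2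

lemma qext_QofPerm (x : Fin n) (c : ℕ) :
    Qext (QofPerm σ) x c = if (σ x : ℕ) + 2 ≤ c then 1 else 0 := by
  have hx := (σ x).isLt
  by_cases h1 : 1 ≤ c ∧ c ≤ n
  · rw [Qext, dif_pos h1]
    show (if (σ x : ℕ) < c - 1 then (1:ℝ) else 0) = _
    split_ifs <;> first | rfl | omega
  · rw [Qext, dif_neg h1]
    split_ifs <;> first | rfl | omega

lemma D_QofPerm (x : Fin n) (a : Fin (n+1)) :
    Qext (QofPerm σ) x ((a:ℕ)+1) - Qext (QofPerm σ) x (a:ℕ)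
      = if (a:ℕ) = (σ x:ℕ)+1 then 1 else 0 := by
  rw [qext_QofPerm, qext_QofPerm]
  split_ifs <;> (try norm_num) <;> omega

lemma densW_QofPerm (hm : m ≤ n) : densW τ (QofPerm σ) = densP τ σ := by
  have hn : 0 < n ∨ m = 0 := by omega
  unfold densW densP
  rw [if_pos hm]
  have hprod : ∀ X : Fin m → Fin n, ∀ A : Fin m → Fin (n+1),
      (∏ i : Fin m, (Qext (QofPerm σ) (X i) ((A (τ i) : ℕ) + 1)
          - Qext (QofPerm σ) (X i) (A (τ i) : ℕ)))
        = if (∀ i : Fin m, (A (τ i) : ℕ) = (σ (X i) : ℕ) + 1) then 1 else 0 := by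
    intro X A
    rw [Finset.prod_congr rfl (fun i _ => D_QofPerm σ (X i) (A (τ i))), Fintype.prod_boole]
    by_cases hP : ∀ i : Fin m, (A (τ i) : ℕ) = (σ (X i) : ℕ) + 1
    · rw [if_pos hP, if_pos hP]
    · rw [if_neg hP, if_neg hP]
  have hinner : ∀ X : Fin m → Fin n,
      (∑ A ∈ Finset.univ.filter (fun A : Fin m → Fin (n + 1) => StrictMono A),
        ∏ i : Fin m, (Qext (QofPerm σ) (X i) ((A (τ i) : ℕ) + 1)
          - Qext (QofPerm σ) (X i) (A (τ i) : ℕ)))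
      = if (∀ i j : Fin m, σ (X i) < σ (X j) ↔ τ i < τ j) then (1:ℝ) else 0 := by
    intro X
    set A₀ : Fin m → Fin (n+1) := fun j => ⟨(σ (X (τ.symm j)) : ℕ) + 1, by
      have := (σ (X (τ.symm j))).isLt; omega⟩ with hA₀
    have hval : ∀ i : Fin m, (A₀ (τ i) : ℕ) = (σ (X i) : ℕ) + 1 := by
      intro i; simp [hA₀]
    have hiff : ∀ A : Fin m → Fin (n+1),
        (∀ i : Fin m, (A (τ i) : ℕ) = (σ (X i) : ℕ) + 1) ↔ A = A₀ := by
      intro A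
      constructor
      · intro h
        funext j
        apply Fin.ext
        have h2 := h (τ.symm j)
        rw [Equiv.apply_symm_apply] at h2
        exact h2
      · rintro rfl i; exact hval i
    rw [Finset.sum_congr rfl (fun A _ => (hprod X A).trans (by rw [if_congr (hiff A) rfl rfl]))]
    rw [Finset.sum_ite_eq' (Finset.univ.filter (fun A : Fin m → Fin (n + 1) => StrictMono A)) A₀
      (fun _ => (1:ℝ))]
    have hmono : StrictMono A₀ ↔ (∀ i j : Fin m, σ (X i) < σ (X j) ↔ τ i < τ j) := by
      constructor
      · intro h i j
        constructor
        · intro hs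
          rcases lt_trichotomy (τ i) (τ j) with h' | h' | h'
          · exact h'
          · exact absurd (τ.injective h') (by rintro rfl; exact lt_irrefl _ hs)
          · have := h h'
            have h1 := hval i; have h2 := hval j
            rw [Fin.lt_def] at this hs
            omega
        · intro ht
          have := h ht
          have h1 := hval i; have h2 := hval j
          rw [Fin.lt_def] at this ⊢
          omega
      · intro pat j j' hjj'
        rw [Fin.lt_def]
        have h1 : (A₀ j : ℕ) = (σ (X (τ.symm j)) : ℕ) + 1 := rfl
        have h2 : (A₀ j' : ℕ) = (σ (X (τ.symm j')) : ℕ) + 1 := rfl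
        rw [h1, h2]
        have : σ (X (τ.symm j)) < σ (X (τ.symm j')) := by
          rw [pat (τ.symm j) (τ.symm j'), Equiv.apply_symm_apply, Equiv.apply_symm_apply]
          exact hjj'
        rw [Fin.lt_def] at this
        omega
    by_cases hc : ∀ i j : Fin m, σ (X i) < σ (X j) ↔ τ i < τ j
    · rw [if_pos hc, if_pos (Finset.mem_filter.mpr ⟨Finset.mem_univ _, hmono.mpr hc⟩)]
    · rw [if_neg hc, if_neg (fun hmem => hc (hmono.mp (Finset.mem_filter.mp hmem).2))]
  rw [Finset.sum_congr rfl (fun X _ => hinner X)]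
  rw [Finset.sum_ite, Finset.sum_const, Finset.sum_const, smul_zero, add_zero, nsmul_eq_mul,
    mul_one]
  rw [inv_mul_eq_div]
  congr 1
  rw [Finset.filter_filter]
  have : occCount τ σ = (Finset.univ.filter
      (fun X : Fin m → Fin n => StrictMono X ∧ ∀ i j : Fin m, σ (X i) < σ (X j) ↔ τ i < τ j)).card := by
    unfold occCount
    rw [Set.ncard_eq_toFinset_card']
    congr 1
    ext X
    simp [Set.mem_toFinset]
  rw [this]
end PermP

/-- the subpermutation density is Lipschitz with respect to the
rectangular distance, for weighted permutations and for permutations. -/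
theorem density_lipschitz_rectangular {m n : ℕ} (τ : Equiv.Perm (Fin m))
    (hn : 0 < n) (hmn : 2 * m ≤ n) :
    (∀ Q₁ Q₂ : Fin n → Fin n → ℝ, WeightedPerm Q₁ → WeightedPerm Q₂ →
        |densW τ Q₁ - densW τ Q₂| ≤ 2 * (m : ℝ) ^ 2 * rectDistW Q₁ Q₂) ∧
      ∀ σ₁ σ₂ : Equiv.Perm (Fin n),
        |densP τ σ₁ - densP τ σ₂| ≤ 2 * (m : ℝ) ^ 2 * rectDistW (QofPerm σ₁) (QofPerm σ₂) := by
  constructor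
  · intro Q₁ Q₂ hQ₁ hQ₂
    exact main_bound τ hn hmn ⟨hQ₁.1, hQ₁.2.1⟩ ⟨hQ₂.1, hQ₂.2.1⟩
  · intro σ₁ σ₂
    rw [← densW_QofPerm τ σ₁ (by omega), ← densW_QofPerm τ σ₂ (by omega)]
    exact main_bound τ hn hmn (goodQ_QofPerm σ₁) (goodQ_QofPerm σ₂)

end
end

section
/- Let Q be a weighted permutation of order n, let Z_Q be its associated step function, and let τ be a permutation of length m with 1<m<n. Then (1 − m/n)^m · t(τ,Q) ≤ t(τ,Z_Q) ≤ t(τ,Q) + (m+2)!/n. -/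
open MeasureTheory Filter Set

open scoped Classical

noncomputable section

/-! On the cell `∏ᵢ (kᵢ/n, (kᵢ+1)/n]` every measure `μ_x` of `Z_Q` is the discrete
row measure of `Q`, with mass `Q(kᵢ, j+1) - Q(kᵢ, j)` at `j/n`, so the core function is
constant there, equal to the summand `G(k)` of `t(τ, Q)`. Hence
`t(τ, Z_Q) = m! ∑ₖ G(k) vol(Δ ∩ cell k)`, `Δ` the simplex. A cell with `k` strictly
increasing lies in `Δ`; these cells contribute `m! n⁻ᵐ ∑ G = d · t(τ, Q)`, where
`d = n(n-1)⋯(n-m+1) / nᵐ`. Any other cell meeting `Δ` has `k` monotone but not injective;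
there are `nᵐ (1 - d)` such `k`, each contributing at most `n⁻ᵐ` since `G ≤ 1`. So
`d t(τ,Q) ≤ t(τ,Z_Q) ≤ d t(τ,Q) + m! (1 - d)`, and `d ≥ (1 - m/n)ᵐ ≥ 1 - m²/n` by
Bernoulli's inequality. -/

open Function
open scoped ENNReal Finset

theorem one_sub_div_pow_le_descFactorial_div_pow {n m : ℕ} (hn : 0 < n) (hmn : m ≤ n) :
    (1 - (m : ℝ) / n) ^ m ≤ n.descFactorial m / n ^ m := by
  have hsub : (1 - (m : ℝ) / n) = ((n - m : ℕ) : ℝ) / n := by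
    rw [Nat.cast_sub hmn]
    field_simp
  rw [hsub, div_pow]
  gcongr
  exact_mod_cast (Nat.pow_le_pow_left (by omega) m).trans (Nat.pow_sub_le_descFactorial n m)

theorem descFactorial_div_pow_le_one (n m : ℕ) : (n.descFactorial m / n ^ m : ℝ) ≤ 1 :=
  div_le_one_of_le₀ (by exact_mod_cast Nat.descFactorial_le_pow n m) (by positivity)

theorem one_sub_descFactorial_div_pow_le {n m : ℕ} (hn : 0 < n) (hmn : m ≤ n) :
    1 - (n.descFactorial m / n ^ m : ℝ) ≤ m ^ 2 / n := by
  have hmn' : (m : ℝ) / n ≤ 1 := div_le_one_of_le₀ (by exact_mod_cast hmn) (Nat.cast_nonneg n)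
  have bernoulli := one_add_mul_le_pow (a := -((m : ℝ) / n)) (by linarith) m
  have hlin : 1 + m * -((m : ℝ) / n) = 1 - m ^ 2 / n := by ring
  rw [hlin, ← sub_eq_add_neg] at bernoulli
  linarith [one_sub_div_pow_le_descFactorial_div_pow hn hmn]

theorem factorial_mul_sq_le_factorial_add_two (m : ℕ) :
    m.factorial * m ^ 2 ≤ (m + 2).factorial := by
  rw [Nat.factorial_succ, Nat.factorial_succ, ← mul_assoc, mul_comm _ m.factorial]
  exact Nat.mul_le_mul_left _ (by nlinarith)

theorem card_injective_fin {m n : ℕ} :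
    #{k : Fin m → Fin n | Injective k} = n.descFactorial m := by
  rw [← Fintype.card_subtype, Fintype.card_congr (Equiv.subtypeInjectiveEquivEmbedding _ _),
    Fintype.card_embedding_eq, Fintype.card_fin, Fintype.card_fin]

theorem card_not_injective_fin {m n : ℕ} :
    (#{k : Fin m → Fin n | ¬Injective k} : ℝ) = (n : ℝ) ^ m - n.descFactorial m := by
  have hsplit := Finset.card_filter_add_card_filter_not (s := Finset.univ)
    (Injective : (Fin m → Fin n) → Prop)
  rw [card_injective_fin, Finset.card_univ, Fintype.card_fun, Fintype.card_fin,
    Fintype.card_fin] at hsplit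
  rw [eq_sub_iff_add_eq', ← Nat.cast_add, hsplit, Nat.cast_pow]

theorem MeasureTheory.Measure.pi_sum_smul_dirac {ι κ α : Type*} [Fintype ι] [Fintype κ]
    [MeasurableSpace α]
    (w : ι → κ → ℝ≥0∞) (hw : ∀ i j, w i j ≠ ∞) (p : κ → α) :
    Measure.pi (fun i => ∑ j, w i j • Measure.dirac (p j)) =
      ∑ A : ι → κ, (∏ i, w i (A i)) • Measure.dirac (fun i => p (A i)) := by
  have : ∀ i, IsFiniteMeasure (∑ j, w i j • Measure.dirac (p j)) := fun i =>
    ⟨by simpa [Measure.finsetSum_apply] using fun j => (hw i j).lt_top⟩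
  refine Measure.pi_eq fun s hs => ?_
  simp only [Measure.finsetSum_apply, Measure.smul_apply, smul_eq_mul,
    Measure.dirac_apply' _ (hs _), Measure.dirac_apply' _ (MeasurableSet.univ_pi hs),
    Finset.prod_univ_sum, Fintype.piFinset_univ, Finset.prod_mul_distrib]
  congr! 2 with A
  simp only [Set.indicator_apply, Set.mem_univ_pi, Pi.one_apply, Fintype.prod_boole]

section StepFunctionDensity

variable {n m : ℕ}

theorem Qext_monotone {Q : Fin n → Fin n → ℝ} (h01 : ∀ i j, Q i j ∈ Icc (0 : ℝ) 1)
    (hmono : ∀ i, Monotone (Q i)) (i : Fin n) : Monotone (Qext Q i) := by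
  refine monotone_nat_of_le_succ fun a => ?_
  unfold Qext
  split_ifs
  · exact hmono i (Fin.mk_le_mk.2 (by omega))
  all_goals first
    | contradiction | (exfalso; omega) | exact (h01 i _).1 | exact (h01 i _).2 | norm_num

def rowMass (Q : Fin n → Fin n → ℝ) (i : Fin n) (j : Fin (n + 1)) : ℝ :=
  Qext Q i ((j : ℕ) + 1) - Qext Q i j

theorem rowMass_nonneg {Q : Fin n → Fin n → ℝ} (h01 : ∀ i j, Q i j ∈ Icc (0 : ℝ) 1)
    (hmono : ∀ i, Monotone (Q i)) (i : Fin n) (j : Fin (n + 1)) : 0 ≤ rowMass Q i j :=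
  sub_nonneg.2 (Qext_monotone h01 hmono i (Nat.le_succ _))

theorem sum_rowMass (Q : Fin n → Fin n → ℝ) (i : Fin n) : ∑ j, rowMass Q i j = 1 := by
  unfold rowMass
  rw [Fin.sum_univ_eq_sum_range (fun j => Qext Q i (j + 1) - Qext Q i j),
    Finset.sum_range_sub (Qext Q i)]
  simp [Qext]

theorem measurableSet_incSimplex : MeasurableSet (incSimplex m) := by
  have : incSimplex m = (⋂ (i : Fin m) (j : Fin m) (_ : i < j), {y | y i < y j}) ∩ Icc 0 1 := by
    ext y
    simp [incSimplex, StrictMono, Pi.le_def, forall_and]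
  rw [this]
  exact (MeasurableSet.iInter fun i => MeasurableSet.iInter fun j => MeasurableSet.iInter fun _ =>
    measurableSet_lt (measurable_pi_apply i) (measurable_pi_apply j)).inter measurableSet_Icc

theorem comp_mem_incSimplex_iff {κ : Type*} [LinearOrder κ] {p : κ → ℝ} (hp : StrictMono p)
    (hp01 : ∀ j, p j ∈ Icc (0 : ℝ) 1) {A : Fin m → κ} :
    (fun i => p (A i)) ∈ incSimplex m ↔ StrictMono A :=
  ⟨fun h _ _ hab => hp.lt_iff_lt.1 (h.1 hab), fun h => ⟨hp.comp h, fun _ => hp01 _⟩⟩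

theorem pi_sum_smul_dirac_incSimplex {κ : Type*} [Fintype κ] [LinearOrder κ]
    (w : Fin m → κ → ℝ≥0∞) (hw : ∀ i j, w i j ≠ ∞) {p : κ → ℝ} (hp : StrictMono p)
    (hp01 : ∀ j, p j ∈ Icc (0 : ℝ) 1) :
    Measure.pi (fun i => ∑ j, w i j • Measure.dirac (p j)) (incSimplex m) =
      ∑ A : Fin m → κ with StrictMono A, ∏ i, w i (A i) := by
  simp only [Measure.pi_sum_smul_dirac w hw, Measure.finsetSum_apply, Measure.smul_apply,
    Measure.dirac_apply' _ measurableSet_incSimplex, smul_eq_mul, Set.indicator_apply,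
    comp_mem_incSimplex_iff hp hp01, Pi.one_apply, mul_ite, mul_one, mul_zero,
    Finset.sum_ite, Finset.sum_const_zero, add_zero]
  -- the two filters differ only in their `Decidable` instances
  convert rfl

def rowMeasure (Q : Fin n → Fin n → ℝ) (i : Fin n) : Measure ℝ :=
  ∑ j : Fin (n + 1), ENNReal.ofReal (rowMass Q i j) • Measure.dirac ((j : ℝ) / n)

def patternWeight (Q : Fin n → Fin n → ℝ) (τ : Equiv.Perm (Fin m)) (k : Fin m → Fin n) :
    ℝ :=
  ∑ A : Fin m → Fin (n + 1) with StrictMono A, ∏ i, rowMass Q (k (τ.symm i)) (A i)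

theorem pi_rowMeasure_incSimplex {Q : Fin n → Fin n → ℝ} (hQ : ∀ i j, 0 ≤ rowMass Q i j)
    (hn : 0 < n) (τ : Equiv.Perm (Fin m)) (k : Fin m → Fin n) :
    ((Measure.pi fun i => rowMeasure Q (k (τ.symm i))) (incSimplex m)).toReal =
      patternWeight Q τ k := by
  have hp : StrictMono fun j : Fin (n + 1) => (j : ℝ) / n := fun a b hab =>
    div_lt_div_of_pos_right (by exact_mod_cast hab) (by positivity)
  have hp01 : ∀ j : Fin (n + 1), (j : ℝ) / n ∈ Icc (0 : ℝ) 1 := fun j =>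
    ⟨by positivity, div_le_one_of_le₀ (by exact_mod_cast j.is_le) (Nat.cast_nonneg _)⟩
  simp only [rowMeasure]
  rw [pi_sum_smul_dirac_incSimplex _ (fun _ _ => ENNReal.ofReal_ne_top) hp hp01,
    ENNReal.toReal_sum fun _ _ => ENNReal.prod_ne_top fun _ _ => ENNReal.ofReal_ne_top]
  simp only [ENNReal.toReal_prod, ENNReal.toReal_ofReal (hQ _ _), patternWeight]

theorem mem_Ioc_div_iff_ceil (hn : 0 < n) {j : ℕ} {x : ℝ} :
    x ∈ Ioc ((j : ℝ) / n) ((j + 1 : ℝ) / n) ↔ ⌈(n : ℝ) * x⌉ = j + 1 := by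
  have hnR : (0 : ℝ) < n := by exact_mod_cast hn
  rw [Int.ceil_eq_iff, Set.mem_Ioc, div_lt_iff₀ hnR, le_div_iff₀ hnR]
  push_cast
  constructor <;> rintro ⟨h₁, h₂⟩ <;> constructor <;> linarith

theorem iUnion_Ioc_div (hn : 0 < n) :
    ⋃ j : Fin n, Ioc ((j : ℝ) / n) ((j + 1 : ℝ) / n) = Ioc 0 1 := by
  have hnR : (0 : ℝ) < n := by exact_mod_cast hn
  have hIoc (x : ℝ) : x ∈ Ioc 0 1 ↔ 0 < ⌈(n : ℝ) * x⌉ ∧ ⌈(n : ℝ) * x⌉ ≤ n := by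
    rw [Int.ceil_pos, Int.ceil_le, Int.cast_natCast, mul_pos_iff_of_pos_left hnR,
      mul_le_iff_le_one_right hnR, Set.mem_Ioc]
  ext x
  simp only [Set.mem_iUnion, mem_Ioc_div_iff_ceil hn, hIoc]
  constructor
  · rintro ⟨j, hj⟩
    omega
  · rintro ⟨h₀, h₁⟩
    exact ⟨⟨(⌈(n : ℝ) * x⌉ - 1).toNat, by omega⟩, by simp only; omega⟩

/-- Cells are indexed from `0`, like `Fin n`: on `cell n k` we have `⌈n xᵢ⌉ = kᵢ + 1`, so that
`Z_Q(xᵢ, ·)` is row `kᵢ` of `Q`. -/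
def cell (n : ℕ) (k : Fin m → Fin n) : Set (Fin m → ℝ) :=
  Set.univ.pi fun i => Ioc ((k i : ℝ) / n) ((k i + 1 : ℝ) / n)

theorem measurableSet_cell (k : Fin m → Fin n) : MeasurableSet (cell n k) :=
  MeasurableSet.univ_pi fun _ => measurableSet_Ioc

theorem volume_cell (k : Fin m → Fin n) :
    volume (cell n k) = ENNReal.ofReal ((n : ℝ)⁻¹) ^ m := by
  have hwidth : ∀ a : ℝ, (a + 1) / n - a / n = (n : ℝ)⁻¹ := fun a => by ring
  simp only [cell, volume_pi_pi, Real.volume_Ioc, hwidth, Finset.prod_const, Finset.card_univ,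
    Fintype.card_fin]

theorem iUnion_cell (hn : 0 < n) :
    ⋃ k : Fin m → Fin n, cell n k = Set.univ.pi fun _ => Ioc 0 1 := by
  rw [← iUnion_Ioc_div hn]
  exact Set.iUnion_univ_pi fun (_ : Fin m) (j : Fin n) => Ioc ((j : ℝ) / n) ((j + 1 : ℝ) / n)

theorem ceil_mul_eq_of_mem_cell (hn : 0 < n) {k : Fin m → Fin n} {x : Fin m → ℝ}
    (hx : x ∈ cell n k) (i : Fin m) : ⌈(n : ℝ) * x i⌉ = (k i : ℕ) + 1 :=
  (mem_Ioc_div_iff_ceil hn).1 (hx i (Set.mem_univ i))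

theorem pairwise_disjoint_cell (hn : 0 < n) :
    Pairwise (Disjoint on (cell n : (Fin m → Fin n) → Set (Fin m → ℝ))) :=
  fun k k' hne => Set.disjoint_left.2 fun x hx hx' => hne <| funext fun i => Fin.ext <| by
    have := (ceil_mul_eq_of_mem_cell hn hx i).symm.trans (ceil_mul_eq_of_mem_cell hn hx' i)
    omega

theorem le_of_mem_cell (hn : 0 < n) {k : Fin m → Fin n} {x : Fin m → ℝ} (hx : x ∈ cell n k)
    {a b : Fin m} (hab : x a ≤ x b) : k a ≤ k b := by
  have := Int.ceil_mono (mul_le_mul_of_nonneg_left hab (Nat.cast_nonneg (α := ℝ) n))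
  rw [ceil_mul_eq_of_mem_cell hn hx, ceil_mul_eq_of_mem_cell hn hx] at this
  rw [Fin.le_def]
  omega

theorem monotone_of_mem_incSimplex_inter_cell (hn : 0 < n) {k : Fin m → Fin n}
    {x : Fin m → ℝ} (hx : x ∈ incSimplex m ∩ cell n k) : Monotone k :=
  fun _ _ hab => le_of_mem_cell hn hx.2 (hx.1.1.monotone hab)

theorem cell_subset_incSimplex (hn : 0 < n) {k : Fin m → Fin n} (hk : StrictMono k) :
    cell n k ⊆ incSimplex m := by
  intro x hx
  refine ⟨fun a b hab => lt_of_not_ge fun hba => (hk hab).not_ge (le_of_mem_cell hn hx hba),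
    fun i => Set.Ioc_subset_Icc_self ?_⟩
  rw [← iUnion_Ioc_div hn]
  exact Set.mem_iUnion.2 ⟨k i, hx i (Set.mem_univ i)⟩

theorem stepWMeasures_eq_rowMeasure (Q : Fin n → Fin n → ℝ) {j : Fin n} {x : ℝ}
    (hx : x ∈ Ioc ((j : ℝ) / n) ((j + 1 : ℝ) / n)) : stepWMeasures Q x = rowMeasure Q j := by
  have hceil := (mem_Ioc_div_iff_ceil j.pos).1 hx
  have h : ∃ i : Fin n, ((i : ℕ) + 1 : ℤ) = ⌈(n : ℝ) * x⌉ := ⟨j, hceil.symm⟩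
  have hj : h.choose = j := Fin.ext (by have := h.choose_spec; omega)
  rw [stepWMeasures, dif_pos h, hj]
  rfl

theorem coreFn_eq_of_mem_cell {Q : Fin n → Fin n → ℝ} (hQ : ∀ i j, 0 ≤ rowMass Q i j)
    (hn : 0 < n) (τ : Equiv.Perm (Fin m)) {k : Fin m → Fin n} {x : Fin m → ℝ}
    (hx : x ∈ cell n k) : coreFn τ (stepWMeasures Q) x = patternWeight Q τ k := by
  have hrow : ∀ i, stepWMeasures Q (x (τ.symm i)) = rowMeasure Q (k (τ.symm i)) := fun i =>
    stepWMeasures_eq_rowMeasure Q (hx _ (Set.mem_univ _))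
  simp only [coreFn, hrow]
  exact pi_rowMeasure_incSimplex hQ hn τ k

theorem incSimplex_ae_eq_iUnion_inter_cell (hn : 0 < n) :
    incSimplex m =ᵐ[volume] ⋃ k : Fin m → Fin n, incSimplex m ∩ cell n k := by
  rw [← Set.inter_iUnion, iUnion_cell hn]
  have hsub : incSimplex m ⊆ Icc 0 1 := fun y hy => ⟨fun i => (hy.2 i).1, fun i => (hy.2 i).2⟩
  have hIcc : incSimplex m = incSimplex m ∩ Icc 0 1 := (Set.inter_eq_left.2 hsub).symm
  nth_rewrite 1 [hIcc]
  rw [volume_pi]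
  exact (ae_eq_refl _).inter Measure.univ_pi_Ioc_ae_eq_Icc.symm

theorem setIntegral_coreFn_stepWMeasures {Q : Fin n → Fin n → ℝ}
    (hQ : ∀ i j, 0 ≤ rowMass Q i j) (hn : 0 < n) (τ : Equiv.Perm (Fin m)) :
    ∫ x in incSimplex m, coreFn τ (stepWMeasures Q) x =
      ∑ k : Fin m → Fin n, patternWeight Q τ k * volume.real (incSimplex m ∩ cell n k) := by
  have hmeas : ∀ k : Fin m → Fin n, MeasurableSet (incSimplex m ∩ cell n k) := fun k =>
    measurableSet_incSimplex.inter (measurableSet_cell k)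
  have hcore (k : Fin m → Fin n) : EqOn (coreFn τ (stepWMeasures Q))
      (fun _ => patternWeight Q τ k) (incSimplex m ∩ cell n k) := fun _ hx =>
    coreFn_eq_of_mem_cell hQ hn τ hx.2
  have hint : ∀ k : Fin m → Fin n, IntegrableOn (coreFn τ (stepWMeasures Q))
      (incSimplex m ∩ cell n k) := fun k =>
    (integrableOn_const (ne_top_of_le_ne_top (by rw [volume_cell]; finiteness)
      (measure_mono Set.inter_subset_right))).congr_fun (hcore k).symm (hmeas k)
  rw [setIntegral_congr_set (incSimplex_ae_eq_iUnion_inter_cell hn),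
    integral_iUnion_fintype hmeas
      (fun k k' hne => (pairwise_disjoint_cell hn hne).mono Set.inter_subset_right
        Set.inter_subset_right) hint]
  refine Finset.sum_congr rfl fun k _ => ?_
  rw [setIntegral_congr_fun (hmeas k) (hcore k), setIntegral_const, smul_eq_mul, mul_comm]

theorem patternWeight_nonneg {Q : Fin n → Fin n → ℝ} (hQ : ∀ i j, 0 ≤ rowMass Q i j)
    (τ : Equiv.Perm (Fin m)) (k : Fin m → Fin n) : 0 ≤ patternWeight Q τ k :=
  Finset.sum_nonneg fun _ _ => Finset.prod_nonneg fun _ _ => hQ _ _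

theorem patternWeight_le_one {Q : Fin n → Fin n → ℝ} (hQ : ∀ i j, 0 ≤ rowMass Q i j)
    (τ : Equiv.Perm (Fin m)) (k : Fin m → Fin n) : patternWeight Q τ k ≤ 1 :=
  calc patternWeight Q τ k
      ≤ ∑ A : Fin m → Fin (n + 1), ∏ i, rowMass Q (k (τ.symm i)) (A i) :=
        Finset.sum_le_sum_of_subset_of_nonneg (Finset.filter_subset _ _) fun _ _ _ =>
          Finset.prod_nonneg fun _ _ => hQ _ _
    _ = ∏ i, ∑ j, rowMass Q (k (τ.symm i)) j := (Fintype.prod_sum _).symm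
    _ = 1 := by simp only [sum_rowMass, Finset.prod_const_one]

theorem densW_eq_sum_patternWeight (τ : Equiv.Perm (Fin m)) (Q : Fin n → Fin n → ℝ) :
    densW τ Q =
      (n.choose m : ℝ)⁻¹ * ∑ X : Fin m → Fin n with StrictMono X, patternWeight Q τ X := by
  unfold densW patternWeight
  congr 1
  refine Finset.sum_congr rfl fun X _ => Finset.sum_congr rfl fun A _ => ?_
  rw [← Equiv.prod_comp τ fun i => rowMass Q (X (τ.symm i)) (A i)]
  simp only [Equiv.symm_apply_apply, rowMass]

theorem densW_nonneg {Q : Fin n → Fin n → ℝ} (hQ : ∀ i j, 0 ≤ rowMass Q i j)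
    (τ : Equiv.Perm (Fin m)) : 0 ≤ densW τ Q := by
  rw [densW_eq_sum_patternWeight]
  exact mul_nonneg (by positivity) (Finset.sum_nonneg fun _ _ => patternWeight_nonneg hQ τ _)

theorem volume_real_cell (k : Fin m → Fin n) : volume.real (cell n k) = (n : ℝ)⁻¹ ^ m := by
  rw [measureReal_def, volume_cell, ENNReal.toReal_pow, ENNReal.toReal_ofReal (by positivity)]

theorem volume_real_inter_cell_le (k : Fin m → Fin n) :
    volume.real (incSimplex m ∩ cell n k) ≤ (n : ℝ)⁻¹ ^ m :=
  volume_real_cell k ▸ measureReal_mono Set.inter_subset_right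
    (by rw [volume_cell]; finiteness)

theorem volume_real_inter_cell_of_strictMono (hn : 0 < n) {k : Fin m → Fin n}
    (hk : StrictMono k) : volume.real (incSimplex m ∩ cell n k) = (n : ℝ)⁻¹ ^ m := by
  rw [Set.inter_eq_right.2 (cell_subset_incSimplex hn hk), volume_real_cell]

theorem incSimplex_inter_cell_eq_empty (hn : 0 < n) {k : Fin m → Fin n} (hk : ¬Monotone k) :
    incSimplex m ∩ cell n k = ∅ :=
  Set.eq_empty_iff_forall_notMem.2 fun _ hx => hk (monotone_of_mem_incSimplex_inter_cell hn hx)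

theorem patternWeight_mul_volume_ge {Q : Fin n → Fin n → ℝ} (hQ : ∀ i j, 0 ≤ rowMass Q i j)
    (hn : 0 < n) (τ : Equiv.Perm (Fin m)) (k : Fin m → Fin n) :
    (if StrictMono k then patternWeight Q τ k else 0) * (n : ℝ)⁻¹ ^ m ≤
      patternWeight Q τ k * volume.real (incSimplex m ∩ cell n k) := by
  split_ifs with hk
  · rw [volume_real_inter_cell_of_strictMono hn hk]
  · rw [zero_mul]
    exact mul_nonneg (patternWeight_nonneg hQ τ k) measureReal_nonneg

theorem patternWeight_mul_volume_le {Q : Fin n → Fin n → ℝ} (hQ : ∀ i j, 0 ≤ rowMass Q i j)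
    (hn : 0 < n) (τ : Equiv.Perm (Fin m)) (k : Fin m → Fin n) :
    patternWeight Q τ k * volume.real (incSimplex m ∩ cell n k) ≤
      ((if StrictMono k then patternWeight Q τ k else 0) + if ¬Injective k then 1 else 0) *
        (n : ℝ)⁻¹ ^ m := by
  by_cases hk : StrictMono k
  · rw [if_pos hk, if_neg (not_not.2 hk.injective), add_zero,
      volume_real_inter_cell_of_strictMono hn hk]
  rw [if_neg hk, zero_add]
  by_cases hmono : Monotone k
  · rw [if_pos fun hinj => hk (hmono.strictMono_of_injective hinj), one_mul]
    exact (mul_le_of_le_one_left measureReal_nonneg (patternWeight_le_one hQ τ k)).trans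
      (volume_real_inter_cell_le k)
  · rw [incSimplex_inter_cell_eq_empty hn hmono, measureReal_empty, mul_zero]
    positivity

theorem densL_stepWMeasures_bounds {Q : Fin n → Fin n → ℝ} (hQ : ∀ i j, 0 ≤ rowMass Q i j)
    (hn : 0 < n) (hmn : m ≤ n) (τ : Equiv.Perm (Fin m)) :
    (n.descFactorial m / n ^ m : ℝ) * densW τ Q ≤ densL τ (stepWMeasures Q) ∧
      densL τ (stepWMeasures Q) ≤ (n.descFactorial m / n ^ m : ℝ) * densW τ Q +
        m.factorial * (1 - n.descFactorial m / n ^ m) := by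
  set S := ∑ X : Fin m → Fin n with StrictMono X, patternWeight Q τ X with hSdef
  set T := ∑ k : Fin m → Fin n, patternWeight Q τ k * volume.real (incSimplex m ∩ cell n k)
  have hST : S * (n : ℝ)⁻¹ ^ m ≤ T := by
    rw [hSdef, Finset.sum_filter, Finset.sum_mul]
    exact Finset.sum_le_sum fun k _ => patternWeight_mul_volume_ge hQ hn τ k
  have hTS : T ≤ (S + #{k : Fin m → Fin n | ¬Injective k}) * (n : ℝ)⁻¹ ^ m := by
    rw [hSdef, Finset.sum_filter, Finset.card_filter, Nat.cast_sum, ← Finset.sum_add_distrib,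
      Finset.sum_mul]
    push_cast
    exact Finset.sum_le_sum fun k _ => patternWeight_mul_volume_le hQ hn τ k
  have hC : (n.choose m : ℝ) ≠ 0 := by exact_mod_cast (Nat.choose_pos hmn).ne'
  have hS : S = n.choose m * densW τ Q := by
    rw [densW_eq_sum_patternWeight, mul_inv_cancel_left₀ hC]
  have hD : (n.descFactorial m : ℝ) = m.factorial * n.choose m := by
    exact_mod_cast Nat.descFactorial_eq_factorial_mul_choose n m
  have hnm : (n : ℝ) ^ m ≠ 0 := by positivity
  rw [densL, setIntegral_coreFn_stepWMeasures hQ hn τ]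
  constructor
  · calc (n.descFactorial m / n ^ m : ℝ) * densW τ Q
          = m.factorial * (S * (n : ℝ)⁻¹ ^ m) := by
            rw [hS, hD, inv_pow]
            field_simp
      _ ≤ m.factorial * T := by gcongr
  · calc m.factorial * T
        ≤ m.factorial * ((S + #{k : Fin m → Fin n | ¬Injective k}) * (n : ℝ)⁻¹ ^ m) := by
          gcongr
      _ = _ := by
          rw [card_not_injective_fin, hS, hD, inv_pow]
          field_simp

end StepFunctionDensity

theorem density_step_function_approx_general {m n : ℕ} (Q : Fin n → Fin n → ℝ)
    (hQ : WeightedPerm Q) (τ : Equiv.Perm (Fin m)) (hmn : m < n) :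
    (1 - (m : ℝ) / (n : ℝ)) ^ m * densW τ Q ≤ densL τ (stepWMeasures Q) ∧
      densL τ (stepWMeasures Q) ≤ densW τ Q + (Nat.factorial (m + 2) : ℝ) / (n : ℝ) := by
  have hn : 0 < n := by omega
  have hmass : ∀ i j, 0 ≤ rowMass Q i j := rowMass_nonneg hQ.1 hQ.2.1
  obtain ⟨hlow, hup⟩ := densL_stepWMeasures_bounds hmass hn hmn.le τ
  set d : ℝ := n.descFactorial m / n ^ m
  have hW : 0 ≤ densW τ Q := densW_nonneg hmass τ
  have hfac : (m.factorial : ℝ) * m ^ 2 ≤ (m + 2).factorial := by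
    exact_mod_cast factorial_mul_sq_le_factorial_add_two m
  refine ⟨(mul_le_mul_of_nonneg_right (one_sub_div_pow_le_descFactorial_div_pow hn hmn.le) hW).trans
    hlow, hup.trans ?_⟩
  calc d * densW τ Q + m.factorial * (1 - d)
      ≤ densW τ Q + m.factorial * (m ^ 2 / n) := by
        gcongr
        · exact mul_le_of_le_one_left hW (descFactorial_div_pow_le_one n m)
        · exact one_sub_descFactorial_div_pow_le hn hmn.le
    _ ≤ densW τ Q + (m + 2).factorial / n := by
        rw [← mul_div_assoc]
        gcongr

/-- the density of `τ` in the step function `Z_Q` of a weighted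
permutation `Q` approximates the density of `τ` in `Q`. -/
theorem density_step_function_approx {m n : ℕ} (Q : Fin n → Fin n → ℝ)
    (hQ : WeightedPerm Q) (τ : Equiv.Perm (Fin m)) (hm : 1 < m) (hmn : m < n) :
    (1 - (m : ℝ) / (n : ℝ)) ^ m * densW τ Q ≤ densL τ (stepWMeasures Q) ∧
      densL τ (stepWMeasures Q) ≤ densW τ Q + (Nat.factorial (m + 2) : ℝ) / (n : ℝ) :=
  density_step_function_approx_general Q hQ τ hmn

end
end
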